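/- arXiv:2402.12703 — 4 statements merged into one kernel-verified Lean document; each statement's English description precedes it below -/
import Mathlib

section
/- Let N ≥ 1, x₀ ∈ ℝ^N, R > 0 and λ > 0, and let u : ℝ^N → ℝ be continuously differentiable on a neighborhood of the closed ball B_R(x₀). Then (1/(16λ)) ∫_{B_R(x₀)} ‖x − x₀‖² u(x)² e^{−‖x − x₀‖²/(4λ)} dx ≤ (N/4) ∫_{B_R(x₀)} u(x)² e^{−‖x − x₀‖²/(4λ)} dx + λ ∫_{B_R(x₀)} ‖∇u(x)‖² e^{−‖x − x₀‖²/(4λ)} dx. -/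
/-!
Put `w(x) = exp (-‖x - x₀‖² / (4λ))` and `Φ = u² w ≥ 0`. The function
`t ↦ ∫_{B_{tR}(x₀)} Φ = t^N ∫_{B_R(x₀)} Φ (x₀ + t (x - x₀)) dx` is nondecreasing, and its
derivative at `t = 1` is `∫_{B_R(x₀)} (N Φ + DΦ(x)(x - x₀))`, which is therefore nonnegative.
Since `DΦ(x)(x - x₀) = w (2 u Du(x - x₀) - ‖x - x₀‖² u² / (2λ))`, Young's inequality
`2 u Du(x - x₀) ≤ 4λ ‖Du‖² + ‖x - x₀‖² u² / (4λ)` turns this into the claim.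
-/

open MeasureTheory Metric Set Filter Topology Module Pointwise

theorem HasDerivAt.nonneg_of_eventually_le_right {f : ℝ → ℝ} {f' a : ℝ} (hf : HasDerivAt f f' a)
    (hmin : ∀ᶠ t in 𝓝[>] a, f a ≤ f t) : 0 ≤ f' := by
  rw [← add_zero a, ← Filter.map_add_left_nhdsGT, eventually_map, add_zero] at hmin
  refine ge_of_tendsto hf.tendsto_slope_zero_right ?_
  filter_upwards [hmin, self_mem_nhdsWithin] with h hle hpos
  exact smul_nonneg (inv_nonneg.2 (le_of_lt hpos)) (sub_nonneg.2 hle)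

theorem abs_mul_le_add_of_abs_sub_one_le {t R δ : ℝ} (hR : 0 ≤ R) (hδ : 0 ≤ δ)
    (ht : |t - 1| ≤ δ / (R + 1)) : |t| * R ≤ δ + R := by
  have hεR : δ / (R + 1) * R ≤ δ := by
    rw [div_mul_eq_mul_div, div_le_iff₀ (by linarith)]
    nlinarith
  have ht' : |t| ≤ 1 + δ / (R + 1) := by
    simpa using (abs_add_le (t - 1) 1).trans (by linarith)
  nlinarith

theorem setIntegral_closedBall_zero_comp_add_left {E F : Type*} [NormedAddCommGroup E]
    [MeasurableSpace E] [BorelSpace E] [NormedAddCommGroup F] [NormedSpace ℝ F] (μ : Measure E)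
    [μ.IsAddLeftInvariant] (f : E → F) (x₀ : E) (r : ℝ) :
    ∫ y in closedBall 0 r, f (x₀ + y) ∂μ = ∫ x in closedBall x₀ r, f x ∂μ := by
  rw [eq_comm, ← (measurePreserving_add_left μ x₀).setIntegral_preimage_emb
    (measurableEmbedding_addLeft x₀)]
  simp [preimage_add_closedBall]

section Homothety

variable {E F : Type*} [NormedAddCommGroup E] [NormedSpace ℝ E]
  [NormedAddCommGroup F] [NormedSpace ℝ F]

theorem mapsTo_homothety_closedBall (x₀ : E) {R δ : ℝ} (hR : 0 ≤ R) (hδ : 0 ≤ δ) :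
    MapsTo (fun p : ℝ × E => x₀ + p.1 • (p.2 - x₀))
      (closedBall 1 (δ / (R + 1)) ×ˢ closedBall x₀ R) (closedBall x₀ (δ + R)) := by
  rintro ⟨t, x⟩ ⟨ht, hx⟩
  rw [mem_closedBall, Real.dist_eq] at ht
  rw [mem_closedBall, dist_eq_norm] at hx
  rw [mem_closedBall_iff_norm, add_sub_cancel_left, norm_smul, Real.norm_eq_abs]
  exact (mul_le_mul_of_nonneg_left hx (abs_nonneg t)).trans
    (abs_mul_le_add_of_abs_sub_one_le hR hδ ht)

theorem exists_pos_closedBall_add_subset [ProperSpace E] {s : Set E} {x₀ : E} {R : ℝ}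
    (hs : IsOpen s) (hR : 0 ≤ R) (hball : closedBall x₀ R ⊆ s) :
    ∃ δ > 0, closedBall x₀ (δ + R) ⊆ s := by
  obtain ⟨δ, hδ, hδs⟩ := (isCompact_closedBall x₀ R).exists_cthickening_subset_open hs hball
  exact ⟨δ, hδ, cthickening_closedBall hδ.le hR x₀ ▸ hδs⟩

variable [MeasurableSpace E] [BorelSpace E] (μ : Measure E)
  [FiniteDimensional ℝ E] [μ.IsAddHaarMeasure]

theorem setIntegral_closedBall_comp_homothety (f : E → F) (x₀ : E) {t R : ℝ} (ht : 0 < t)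
    (hR : 0 ≤ R) :
    ∫ x in closedBall x₀ R, f (x₀ + t • (x - x₀)) ∂μ =
      (t ^ finrank ℝ E)⁻¹ • ∫ x in closedBall x₀ (t * R), f x ∂μ := by
  have hball : t • closedBall (0 : E) R = closedBall 0 (t * R) := by
    rw [smul_closedBall _ _ hR, smul_zero, Real.norm_of_nonneg ht.le]
  simp only [← setIntegral_closedBall_zero_comp_add_left μ _ x₀, add_sub_cancel_left,
    Measure.setIntegral_comp_smul_of_pos μ (fun y => f (x₀ + y)) _ ht, hball]

variable {s : Set E} {x₀ : E} {R : ℝ} {Φ : E → ℝ}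

theorem hasDerivAt_setIntegral_closedBall_comp_homothety (hs : IsOpen s)
    (hball : closedBall x₀ R ⊆ s) (hΦ : ContDiffOn ℝ 1 Φ s) :
    HasDerivAt (fun t : ℝ => ∫ x in closedBall x₀ R, Φ (x₀ + t • (x - x₀)) ∂μ)
      (∫ x in closedBall x₀ R, fderiv ℝ Φ x (x - x₀) ∂μ) 1 := by
  rcases lt_or_ge R 0 with hR | hR
  · simpa [closedBall_eq_empty.2 hR] using hasDerivAt_const (1 : ℝ) (0 : ℝ)
  obtain ⟨δ, hδ, hδs⟩ := exists_pos_closedBall_add_subset hs hR hball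
  set ε := δ / (R + 1)
  have hε : 0 < ε := by positivity
  have hmaps := (mapsTo_homothety_closedBall x₀ hR hδ.le).mono_right hδs
  have hmaps' : ∀ t ∈ closedBall (1 : ℝ) ε,
      MapsTo (fun x => x₀ + t • (x - x₀)) (closedBall x₀ R) s :=
    fun t ht x hx => hmaps (mk_mem_prod ht hx)
  have hΦc : ContinuousOn Φ s := hΦ.continuousOn
  have hDΦc : ContinuousOn (fderiv ℝ Φ) s := hΦ.continuousOn_fderiv_of_isOpen hs le_rfl
  obtain ⟨C, hC⟩ := ((isCompact_closedBall (1 : ℝ) ε).prod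
    (isCompact_closedBall x₀ R)).exists_bound_of_continuousOn
    (f := fun p : ℝ × E => fderiv ℝ Φ (x₀ + p.1 • (p.2 - x₀)) (p.2 - x₀))
    ((hDΦc.comp (by fun_prop) hmaps).clm_apply (by fun_prop))
  have hderiv := hasDerivAt_integral_of_dominated_loc_of_deriv_le (𝕜 := ℝ) (x₀ := 1)
    (μ := μ.restrict (closedBall x₀ R)) (F := fun t x => Φ (x₀ + t • (x - x₀)))
    (F' := fun t x => fderiv ℝ Φ (x₀ + t • (x - x₀)) (x - x₀)) (bound := fun _ => C)
    (ball_mem_nhds 1 hε) ?_ ?_ ?_ ?_ (integrableOn_const measure_closedBall_lt_top.ne) ?_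
  · simpa using hderiv.2
  · filter_upwards [ball_mem_nhds (1 : ℝ) hε] with t ht
    exact (hΦc.comp (by fun_prop) (hmaps' t (ball_subset_closedBall ht))).aestronglyMeasurable
      measurableSet_closedBall
  · exact (hΦc.comp (by fun_prop) (hmaps' 1 (mem_closedBall_self hε.le))).integrableOn_compact
      (isCompact_closedBall x₀ R)
  · exact ((hDΦc.comp (by fun_prop) (hmaps' 1 (mem_closedBall_self hε.le))).clm_apply
      (by fun_prop)).aestronglyMeasurable measurableSet_closedBall
  · filter_upwards [ae_restrict_mem measurableSet_closedBall] with x hx t ht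
    exact hC (t, x) (mk_mem_prod (ball_subset_closedBall ht) hx)
  · filter_upwards [ae_restrict_mem measurableSet_closedBall] with x hx t ht
    have hxs := hmaps' t (ball_subset_closedBall ht) hx
    have hline : HasDerivAt (fun t : ℝ => x₀ + t • (x - x₀)) (x - x₀) t := by
      simpa using ((hasDerivAt_id t).smul_const (x - x₀)).const_add x₀
    exact ((hΦ.differentiableOn one_ne_zero).differentiableAt
      (hs.mem_nhds hxs)).hasFDerivAt.comp_hasDerivAt t hline

theorem finrank_mul_setIntegral_add_setIntegral_fderiv_nonneg (hs : IsOpen s)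
    (hball : closedBall x₀ R ⊆ s) (hΦ : ContDiffOn ℝ 1 Φ s) (hΦ0 : ∀ x ∈ s, 0 ≤ Φ x) :
    0 ≤ finrank ℝ E * ∫ x in closedBall x₀ R, Φ x ∂μ +
      ∫ x in closedBall x₀ R, fderiv ℝ Φ x (x - x₀) ∂μ := by
  rcases lt_or_ge R 0 with hR | hR
  · simp [closedBall_eq_empty.2 hR]
  obtain ⟨δ, hδ, hδs⟩ := exists_pos_closedBall_add_subset hs hR hball
  have hderiv := (hasDerivAt_pow (finrank ℝ E) (1 : ℝ)).mul
    (hasDerivAt_setIntegral_closedBall_comp_homothety μ hs hball hΦ)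
  simp only [one_pow, mul_one, one_mul, one_smul, add_sub_cancel] at hderiv
  refine hderiv.nonneg_of_eventually_le_right ?_
  filter_upwards [Ioo_mem_nhdsGT (lt_add_of_pos_right 1 (by positivity : 0 < δ / (R + 1)))]
    with t ⟨ht1, ht2⟩
  have htR : t * R ≤ δ + R := by
    have ht : |t - 1| ≤ δ / (R + 1) := by
      rw [abs_of_pos (sub_pos.2 ht1)]
      linarith
    calc t * R ≤ |t| * R := by gcongr; exact le_abs_self t
      _ ≤ δ + R := abs_mul_le_add_of_abs_sub_one_le hR hδ.le ht
  simp only [Pi.mul_apply, one_pow, one_mul, one_smul, add_sub_cancel]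
  rw [setIntegral_closedBall_comp_homothety μ Φ x₀ (by linarith) hR, smul_eq_mul, ← mul_assoc,
    mul_inv_cancel₀ (by positivity), one_mul]
  refine setIntegral_mono_set ?_ ?_ (closedBall_subset_closedBall ?_).eventuallyLE
  · exact (hΦ.continuousOn.mono ((closedBall_subset_closedBall htR).trans hδs)).integrableOn_compact
      (isCompact_closedBall _ _)
  · filter_upwards [ae_restrict_mem measurableSet_closedBall] with x hx
    exact hΦ0 x (hδs (closedBall_subset_closedBall htR hx))
  · nlinarith

end Homothety

section Gaussian

variable {E : Type*} [NormedAddCommGroup E] [InnerProductSpace ℝ E]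

theorem norm_gradient [CompleteSpace E] (f : E → ℝ) (x : E) : ‖gradient f x‖ = ‖fderiv ℝ f x‖ :=
  (InnerProductSpace.toDual ℝ E).symm.norm_map _

theorem fderiv_sq_mul_gaussian_apply_sub_le {u : E → ℝ} {x₀ x : E} {lam : ℝ} (hlam : 0 < lam)
    (hu : DifferentiableAt ℝ u x) :
    fderiv ℝ (fun y => u y ^ 2 * Real.exp (-‖y - x₀‖ ^ 2 / (4 * lam))) x (x - x₀) ≤
      4 * lam * (‖fderiv ℝ u x‖ ^ 2 * Real.exp (-‖x - x₀‖ ^ 2 / (4 * lam))) -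
        ‖x - x₀‖ ^ 2 * u x ^ 2 * Real.exp (-‖x - x₀‖ ^ 2 / (4 * lam)) / (4 * lam) := by
  have hw := (((hasDerivAt_id (‖x - x₀‖ ^ 2)).neg.div_const (4 * lam)).exp).comp_hasFDerivAt x
    ((hasFDerivAt_id x).sub_const x₀).norm_sq
  have hΦ : HasFDerivAt (fun y => u y ^ 2 * Real.exp (-‖y - x₀‖ ^ 2 / (4 * lam))) _ x :=
    (hu.hasFDerivAt.pow 2).mul hw
  rw [hΦ.fderiv]
  simp only [add_apply, smul_apply, ContinuousLinearMap.comp_apply, ContinuousLinearMap.coe_id',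
    innerSL_apply_apply, id_eq, Pi.neg_apply, real_inner_self_eq_norm_sq, smul_eq_mul,
    nsmul_eq_mul, Nat.cast_ofNat]
  set D := fderiv ℝ u x (x - x₀)
  have hD : u x * D ≤ |u x| * (‖fderiv ℝ u x‖ * ‖x - x₀‖) :=
    calc u x * D ≤ |u x| * |D| := (le_abs_self _).trans (abs_mul _ _).le
      _ ≤ _ := mul_le_mul_of_nonneg_left ((fderiv ℝ u x).le_opNorm (x - x₀)) (abs_nonneg _)
  have young : 2 * u x * D ≤
      4 * lam * ‖fderiv ℝ u x‖ ^ 2 + ‖x - x₀‖ ^ 2 * u x ^ 2 / (4 * lam) := by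
    have := sq_nonneg (4 * lam * ‖fderiv ℝ u x‖ - ‖x - x₀‖ * |u x|)
    rw [add_div' _ _ _ (by positivity), le_div_iff₀ (by positivity)]
    nlinarith [sq_abs (u x)]
  linear_combination
    mul_le_mul_of_nonneg_left young (Real.exp_pos (-‖x - x₀‖ ^ 2 / (4 * lam))).le

variable [FiniteDimensional ℝ E] [MeasurableSpace E] [BorelSpace E] (μ : Measure E)
  [μ.IsAddHaarMeasure]

theorem setIntegral_norm_sub_sq_mul_sq_mul_gaussian_le {s : Set E} (hs : IsOpen s) {x₀ : E}
    {R lam : ℝ} (hball : closedBall x₀ R ⊆ s) {u : E → ℝ} (hu : ContDiffOn ℝ 1 u s)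
    (hlam : 0 < lam) :
    (1 / (16 * lam)) * ∫ x in closedBall x₀ R,
        ‖x - x₀‖ ^ 2 * u x ^ 2 * Real.exp (-‖x - x₀‖ ^ 2 / (4 * lam)) ∂μ ≤
      (finrank ℝ E / 4) *
          (∫ x in closedBall x₀ R, u x ^ 2 * Real.exp (-‖x - x₀‖ ^ 2 / (4 * lam)) ∂μ) +
        lam * ∫ x in closedBall x₀ R,
          ‖gradient u x‖ ^ 2 * Real.exp (-‖x - x₀‖ ^ 2 / (4 * lam)) ∂μ := by
  have hw : ContDiff ℝ 1 fun x : E => Real.exp (-‖x - x₀‖ ^ 2 / (4 * lam)) :=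
    Real.contDiff_exp.comp (((contDiff_id.sub contDiff_const).norm_sq ℝ).neg.div_const _)
  have hΦ : ContDiffOn ℝ 1 (fun x => u x ^ 2 * Real.exp (-‖x - x₀‖ ^ 2 / (4 * lam))) s :=
    (hu.pow 2).mul hw.contDiffOn
  have hint : ∀ f : E → ℝ, ContinuousOn f s → IntegrableOn f (closedBall x₀ R) μ :=
    fun f hf => (hf.mono hball).integrableOn_compact (isCompact_closedBall x₀ R)
  have hdiv := finrank_mul_setIntegral_add_setIntegral_fderiv_nonneg μ hs hball hΦ
    fun x _ => by positivity
  have hbound : ∫ x in closedBall x₀ R, fderiv ℝ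
        (fun x => u x ^ 2 * Real.exp (-‖x - x₀‖ ^ 2 / (4 * lam))) x (x - x₀) ∂μ ≤
      4 * lam * (∫ x in closedBall x₀ R,
          ‖fderiv ℝ u x‖ ^ 2 * Real.exp (-‖x - x₀‖ ^ 2 / (4 * lam)) ∂μ) -
        (∫ x in closedBall x₀ R,
          ‖x - x₀‖ ^ 2 * u x ^ 2 * Real.exp (-‖x - x₀‖ ^ 2 / (4 * lam)) ∂μ) / (4 * lam) := by
    have huc := hu.continuousOn
    have hDuc := hu.continuousOn_fderiv_of_isOpen hs le_rfl
    have hDΦc := hΦ.continuousOn_fderiv_of_isOpen hs le_rfl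
    rw [← integral_const_mul, ← integral_div, ← integral_sub]
    · refine setIntegral_mono_on (hint _ ?_) (hint _ ?_) measurableSet_closedBall fun x hx => ?_
      · fun_prop
      · fun_prop
      · exact fderiv_sq_mul_gaussian_apply_sub_le hlam
          ((hu.differentiableOn one_ne_zero).differentiableAt (hs.mem_nhds (hball hx)))
    · exact (hint _ (by fun_prop)).const_mul _
    · exact (hint _ (by fun_prop)).div_const _
  simp only [norm_gradient]
  linear_combination (hdiv + hbound) / 4

end Gaussian

theorem hardy_uncertainty_gaussian_general (N : ℕ) (x₀ : EuclideanSpace ℝ (Fin N))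
    (R lam : ℝ) (hlam : 0 < lam)
    (u : EuclideanSpace ℝ (Fin N) → ℝ) (s : Set (EuclideanSpace ℝ (Fin N)))
    (hs : IsOpen s) (hball : Metric.closedBall x₀ R ⊆ s) (hu : ContDiffOn ℝ 1 u s) :
    (1 / (16 * lam)) *
        ∫ x in Metric.closedBall x₀ R,
          ‖x - x₀‖ ^ 2 * (u x) ^ 2 * Real.exp (-‖x - x₀‖ ^ 2 / (4 * lam)) ≤
      ((N : ℝ) / 4) *
          (∫ x in Metric.closedBall x₀ R, (u x) ^ 2 * Real.exp (-‖x - x₀‖ ^ 2 / (4 * lam))) +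
        lam *
          ∫ x in Metric.closedBall x₀ R,
            ‖gradient u x‖ ^ 2 * Real.exp (-‖x - x₀‖ ^ 2 / (4 * lam)) := by
  simpa using setIntegral_norm_sub_sq_mul_sq_mul_gaussian_le volume hs hball hu hlam

/-- Hardy-type uncertainty inequality with Gaussian weight on a ball centered at the
same point as the weight. -/
theorem hardy_uncertainty_gaussian (N : ℕ) (hN : 1 ≤ N) (x₀ : EuclideanSpace ℝ (Fin N))
    (R lam : ℝ) (hR : 0 < R) (hlam : 0 < lam)
    (u : EuclideanSpace ℝ (Fin N) → ℝ) (s : Set (EuclideanSpace ℝ (Fin N)))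
    (hs : IsOpen s) (hball : Metric.closedBall x₀ R ⊆ s) (hu : ContDiffOn ℝ 1 u s) :
    (1 / (16 * lam)) *
        ∫ x in Metric.closedBall x₀ R,
          ‖x - x₀‖ ^ 2 * (u x) ^ 2 * Real.exp (-‖x - x₀‖ ^ 2 / (4 * lam)) ≤
      ((N : ℝ) / 4) *
          (∫ x in Metric.closedBall x₀ R, (u x) ^ 2 * Real.exp (-‖x - x₀‖ ^ 2 / (4 * lam))) +
        lam *
          ∫ x in Metric.closedBall x₀ R,
            ‖gradient u x‖ ^ 2 * Real.exp (-‖x - x₀‖ ^ 2 / (4 * lam)) :=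
  hardy_uncertainty_gaussian_general N x₀ R lam hlam u s hs hball hu
end

section
/- Let T ∈ ℝ, λ > 0, β ≥ 0 and t₀ < T. Let y : ℝ → ℝ be differentiable on [t₀, T] and f : ℝ → ℝ be continuous and nonnegative on [t₀, T], and suppose that y′(s) ≤ (1/(T − s + λ) + 2β) · y(s) + f(s) for every s ∈ [t₀, T]. Then λ · y(T) ≤ e^{2β(T − t₀)} · [ (T − t₀ + λ) · y(t₀) + ∫_{t₀}^{T} (T − s + λ) f(s) ds ]. -/
open intervalIntegral MeasureTheory Real Set

/-!
Put `z s = (T - s + λ) y s`. Differentiating the weight contributes `-y s`, which cancels the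
singular coefficient `1 / (T - s + λ)`, so the hypothesis becomes the linear inequality
`z' ≤ 2β z + (T - s + λ) f`. With the integrating factor `exp (2β (T - s))` this gives
`z T ≤ exp (2β (T - t₀)) z t₀ + ∫ exp (2β (T - s)) (T - s + λ) f s`, and since `β ≥ 0` and
`f ≥ 0` the factor under the integral is at most `exp (2β (T - t₀))`.
-/

theorem le_exp_mul_add_integral_of_deriv_le {z z' h : ℝ → ℝ} {a b μ : ℝ} (hab : a ≤ b)
    (hz : ContinuousOn z (Icc a b)) (hderiv : ∀ s ∈ Ioo a b, HasDerivWithinAt z (z' s) (Ioi s) s)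
    (hh : IntegrableOn h (Icc a b)) (hbound : ∀ s ∈ Ioo a b, z' s ≤ μ * z s + h s) :
    z b ≤ exp (μ * (b - a)) * z a + ∫ s in a..b, exp (μ * (b - s)) * h s := by
  have hexp : ∀ s, HasDerivAt (fun s => exp (μ * (b - s))) (exp (μ * (b - s)) * -μ) s := by
    intro s
    simpa using (((hasDerivAt_id s).const_sub b).const_mul μ).exp
  have key := sub_le_integral_of_hasDeriv_right_of_le hab
    (g := fun s => exp (μ * (b - s)) * z s) (φ := fun s => exp (μ * (b - s)) * h s)
    ((by fun_prop : Continuous fun s => exp (μ * (b - s))).continuousOn.mul hz)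
    (fun s hs => (hexp s).hasDerivWithinAt.mul (hderiv s hs))
    (hh.continuousOn_mul (by fun_prop) isCompact_Icc)
    (fun s hs => by
      have := mul_le_mul_of_nonneg_left (hbound s hs) (exp_pos (μ * (b - s))).le
      linarith)
  simp only [sub_self, mul_zero, exp_zero, one_mul] at key
  linarith

theorem integral_exp_mul_le_exp_mul_integral {h : ℝ → ℝ} {a b μ : ℝ} (hab : a ≤ b) (hμ : 0 ≤ μ)
    (hh : IntegrableOn h (Icc a b)) (h0 : ∀ s ∈ Icc a b, 0 ≤ h s) :
    ∫ s in a..b, exp (μ * (b - s)) * h s ≤ exp (μ * (b - a)) * ∫ s in a..b, h s := by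
  rw [← intervalIntegral.integral_const_mul]
  refine integral_mono_on hab ?_ ?_ fun s hs => ?_
  · exact (intervalIntegrable_iff_integrableOn_Icc_of_le hab).2
      (hh.continuousOn_mul (by fun_prop : Continuous fun s => exp (μ * (b - s))).continuousOn
        isCompact_Icc)
  · exact ((intervalIntegrable_iff_integrableOn_Icc_of_le hab).2 hh).const_mul _
  · exact mul_le_mul_of_nonneg_right (exp_le_exp.2 (by nlinarith [hs.1])) (h0 s hs)

/-- Grönwall-type differential inequality used in Step 2 of the proof of the
two-ball and one-cylinder inequality. -/
theorem gronwall_type (T lam β t₀ : ℝ) (hlam : 0 < lam) (hβ : 0 ≤ β) (ht₀ : t₀ < T)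
    (y f : ℝ → ℝ)
    (hy : DifferentiableOn ℝ y (Set.Icc t₀ T))
    (hf : ContinuousOn f (Set.Icc t₀ T))
    (hf0 : ∀ s ∈ Set.Icc t₀ T, 0 ≤ f s)
    (hineq : ∀ s ∈ Set.Icc t₀ T,
      derivWithin y (Set.Icc t₀ T) s ≤ (1 / (T - s + lam) + 2 * β) * y s + f s) :
    lam * y T ≤ Real.exp (2 * β * (T - t₀)) *
      ((T - t₀ + lam) * y t₀ + ∫ s in t₀..T, (T - s + lam) * f s) := by
  have hw : ∀ s ∈ Icc t₀ T, 0 < T - s + lam := fun s hs => by linarith [hs.2]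
  have hw_cont : ContinuousOn (fun s => T - s + lam) (Icc t₀ T) := by fun_prop
  have hwf : IntegrableOn (fun s => (T - s + lam) * f s) (Icc t₀ T) :=
    (hw_cont.mul hf).integrableOn_compact isCompact_Icc
  have hz_deriv : ∀ s ∈ Ioo t₀ T, HasDerivAt (fun s => (T - s + lam) * y s)
      (-y s + (T - s + lam) * derivWithin y (Icc t₀ T) s) s := fun s hs => by
    have hy' := (hy s (Ioo_subset_Icc_self hs)).hasDerivWithinAt.hasDerivAt
      (Icc_mem_nhds hs.1 hs.2)
    have hw' : HasDerivAt (fun s => T - s + lam) (-1) s := by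
      simpa using ((hasDerivAt_id s).const_sub T).add_const lam
    exact (hw'.mul hy').congr_deriv (by ring)
  have hz_bound : ∀ s ∈ Ioo t₀ T, -y s + (T - s + lam) * derivWithin y (Icc t₀ T) s ≤
      2 * β * ((T - s + lam) * y s) + (T - s + lam) * f s := fun s hs => by
    have hs' := Ioo_subset_Icc_self hs
    have := mul_le_mul_of_nonneg_left (hineq s hs') (hw s hs').le
    rw [mul_add, ← mul_assoc, mul_add, mul_one_div_cancel (hw s hs').ne'] at this
    linarith
  have hz := le_exp_mul_add_integral_of_deriv_le ht₀.le (hw_cont.mul hy.continuousOn)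
    (fun s hs => (hz_deriv s hs).hasDerivWithinAt) hwf hz_bound
  have hint := integral_exp_mul_le_exp_mul_integral ht₀.le (mul_nonneg zero_le_two hβ) hwf
    fun s hs => mul_nonneg (hw s hs).le (hf0 s hs)
  simp only [Pi.mul_apply, sub_self, zero_add] at hz
  linarith
end

section
/- Let N ≥ 1, T > 0, λ > 0, x₀ ∈ ℝ^N and R₀ > 0. Let F : ℝ^N × (0,T) → ℝ be continuous, and let u : ℝ^N × (0,T) → ℝ be smooth with the property that there is a radius ρ < R₀ such that u(x,t) = 0 whenever ‖x − x₀‖ ≥ ρ, and such that ∂_t u(x,t) = Δu(x,t) + F(x,t) for all (x,t) ∈ ℝ^N × (0,T). Define H(t) = ∫_{B_{R₀}(x₀)} u(x,t)² G_λ(x,t) dx and D(t) = ∫_{B_{R₀}(x₀)} ‖∇u(x,t)‖² G_λ(x,t) dx. Then H is differentiable on (0,T) and for every t ∈ (0,T): H′(t) = −2 D(t) + 2 ∫_{B_{R₀}(x₀)} u(x,t) F(x,t) G_λ(x,t) dx. -/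
open MeasureTheory

/-- The Gaussian weight `G_λ(x,t) = (T - t + λ)^(-N/2) exp(-‖x - x₀‖² / (4(T - t + λ)))`. -/
noncomputable def gaussianWeight (N : ℕ) (T lam : ℝ) (x₀ : EuclideanSpace ℝ (Fin N))
    (x : EuclideanSpace ℝ (Fin N)) (t : ℝ) : ℝ :=
  (T - t + lam) ^ (-(N : ℝ) / 2) * Real.exp (-‖x - x₀‖ ^ 2 / (4 * (T - t + lam)))

/-- The `i`-th second partial derivative of `f` at `x`. -/
noncomputable def secondPartial (N : ℕ) (f : EuclideanSpace ℝ (Fin N) → ℝ) (i : Fin N)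
    (x : EuclideanSpace ℝ (Fin N)) : ℝ :=
  fderiv ℝ (fun y => fderiv ℝ f y (EuclideanSpace.single i 1)) x (EuclideanSpace.single i 1)

section helpers
variable {N : ℕ} {T lam : ℝ} {x₀ : EuclideanSpace ℝ (Fin N)}

lemma gw_eq (x : EuclideanSpace ℝ (Fin N)) {s : ℝ} (h : 0 < T - s + lam) :
    gaussianWeight N T lam x₀ x s =
      Real.exp (Real.log (T - s + lam) * (-(N : ℝ) / 2) + -‖x - x₀‖ ^ 2 / (4 * (T - s + lam))) := by
  rw [gaussianWeight, Real.rpow_def_of_pos h, Real.exp_add]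

lemma gw_hasDerivAt_time (x : EuclideanSpace ℝ (Fin N)) {s : ℝ} (h : 0 < T - s + lam) :
    HasDerivAt (fun r => gaussianWeight N T lam x₀ x r)
      (gaussianWeight N T lam x₀ x s *
        ((N : ℝ) * (2 * (T - s + lam))⁻¹ - ‖x - x₀‖ ^ 2 * ((2 * (T - s + lam))⁻¹) ^ 2)) s := by
  have hτ : HasDerivAt (fun r : ℝ => T - r + lam) (-1) s := by
    simpa using ((hasDerivAt_id s).const_sub T).add_const lam
  have h1 : HasDerivAt (fun r => Real.log (T - r + lam) * (-(N : ℝ) / 2))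
      ((T - s + lam)⁻¹ * (-1) * (-(N : ℝ) / 2)) s :=
    ((Real.hasDerivAt_log h.ne').comp s hτ).mul_const _
  have hden : HasDerivAt (fun r : ℝ => 4 * (T - r + lam)) (4 * (-1)) s := hτ.const_mul 4
  have hden0 : 4 * (T - s + lam) ≠ 0 := by positivity
  have h2 : HasDerivAt (fun r => -‖x - x₀‖ ^ 2 / (4 * (T - r + lam)))
      (-‖x - x₀‖ ^ 2 * (-(4 * (-1)) / (4 * (T - s + lam)) ^ 2)) s := by
    simpa [div_eq_mul_inv] using (hden.inv hden0).const_mul (-‖x - x₀‖ ^ 2)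
  have hψ := (h1.add h2).exp
  have hev : (fun r => gaussianWeight N T lam x₀ x r) =ᶠ[nhds s] fun r =>
      Real.exp (Real.log (T - r + lam) * (-(N : ℝ) / 2) + -‖x - x₀‖ ^ 2 / (4 * (T - r + lam))) := by
    have hop : IsOpen {r : ℝ | 0 < T - r + lam} := by
      have : Continuous fun r : ℝ => T - r + lam := by continuity
      exact isOpen_lt continuous_const this
    filter_upwards [hop.mem_nhds (by simpa using h)] with r hr
    exact gw_eq x hr
  have hfin := hψ.congr_of_eventuallyEq hev
  refine hfin.congr_deriv ?_
  simp only [Pi.add_apply]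
  rw [gw_eq x h]
  have hne : T - s + lam ≠ 0 := h.ne'
  field_simp
  ring

lemma gw_hasFDerivAt_space {s : ℝ} (h : 0 < T - s + lam) (x : EuclideanSpace ℝ (Fin N)) :
    HasFDerivAt (fun y => gaussianWeight N T lam x₀ y s)
      ((gaussianWeight N T lam x₀ x s * -(2 * (T - s + lam))⁻¹) • innerSL ℝ (x - x₀)) x := by
  have hn : HasFDerivAt (fun y : EuclideanSpace ℝ (Fin N) => ‖y - x₀‖ ^ 2)
      (2 • innerSL ℝ (x - x₀)) x := by
    simpa using ((hasFDerivAt_id x).sub_const x₀).norm_sq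
  have hφ : HasFDerivAt (fun y : EuclideanSpace ℝ (Fin N) =>
      Real.log (T - s + lam) * (-(N : ℝ) / 2) + -‖y - x₀‖ ^ 2 / (4 * (T - s + lam)))
      ((-(4 * (T - s + lam))⁻¹) • (2 • innerSL ℝ (x - x₀))) x := by
    have : (fun y : EuclideanSpace ℝ (Fin N) =>
        Real.log (T - s + lam) * (-(N : ℝ) / 2) + -‖y - x₀‖ ^ 2 / (4 * (T - s + lam))) =
        fun y => Real.log (T - s + lam) * (-(N : ℝ) / 2) +
          (-(4 * (T - s + lam))⁻¹) * ‖y - x₀‖ ^ 2 := by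
      funext y; ring
    rw [this]
    exact (hn.const_mul _).const_add _
  have hexp := hφ.exp
  have heq : (fun y => gaussianWeight N T lam x₀ y s) = fun y =>
      Real.exp (Real.log (T - s + lam) * (-(N : ℝ) / 2) + -‖y - x₀‖ ^ 2 / (4 * (T - s + lam))) :=
    funext fun y => gw_eq y h
  rw [heq]
  have hclm : (gaussianWeight N T lam x₀ x s * -(2 * (T - s + lam))⁻¹) • innerSL ℝ (x - x₀) =
      Real.exp (Real.log (T - s + lam) * (-(N : ℝ) / 2) + -‖x - x₀‖ ^ 2 / (4 * (T - s + lam))) •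
        (-(4 * (T - s + lam))⁻¹) • (2 • innerSL ℝ (x - x₀)) := by
    ext y
    simp only [ContinuousLinearMap.smul_apply, smul_eq_mul, innerSL_apply_apply]
    rw [gw_eq x h]
    have hne : T - s + lam ≠ 0 := h.ne'
    field_simp
    ring
  rw [hclm]
  exact hexp


lemma gw_fderiv_apply {s : ℝ} (h : 0 < T - s + lam) (x : EuclideanSpace ℝ (Fin N)) (i : Fin N) :
    fderiv ℝ (fun y => gaussianWeight N T lam x₀ y s) x (EuclideanSpace.single i 1) =
      gaussianWeight N T lam x₀ x s * (-(2 * (T - s + lam))⁻¹ * (x i - x₀ i)) := by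
  rw [(gw_hasFDerivAt_space h x).fderiv]
  simp [real_inner_comm, EuclideanSpace.inner_single_left, EuclideanSpace.inner_single_right]
  ring

lemma gw_diff {s : ℝ} (h : 0 < T - s + lam) :
    Differentiable ℝ (fun y => gaussianWeight N T lam x₀ y s) :=
  fun x => (gw_hasFDerivAt_space h x).differentiableAt

lemma gw_second {s : ℝ} (h : 0 < T - s + lam) (x : EuclideanSpace ℝ (Fin N)) (i : Fin N) :
    fderiv ℝ (fun y => gaussianWeight N T lam x₀ y s * (-(2 * (T - s + lam))⁻¹ * (y i - x₀ i)))
        x (EuclideanSpace.single i 1) =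
      gaussianWeight N T lam x₀ x s *
        (((2 * (T - s + lam))⁻¹) ^ 2 * (x i - x₀ i) ^ 2 - (2 * (T - s + lam))⁻¹) := by
  have hd : HasFDerivAt (fun y : EuclideanSpace ℝ (Fin N) => -(2 * (T - s + lam))⁻¹ * (y i - x₀ i))
      ((-(2 * (T - s + lam))⁻¹ : ℝ) • (EuclideanSpace.proj (𝕜 := ℝ) i)) x := by
    exact (((EuclideanSpace.proj (𝕜 := ℝ) i).hasFDerivAt (x := x)).sub_const (x₀ i)).const_mul _
  rw [((gw_hasFDerivAt_space h x).fun_mul hd).fderiv]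
  simp [real_inner_comm, EuclideanSpace.inner_single_left, EuclideanSpace.inner_single_right, EuclideanSpace.single_apply]
  ring

lemma esum_norm_sq (v : EuclideanSpace ℝ (Fin N)) : ‖v‖ ^ 2 = ∑ i, (v i) ^ 2 := by
  rw [EuclideanSpace.norm_eq, Real.sq_sqrt (by positivity)]
  simp [Real.norm_eq_abs, sq_abs]

lemma gw_contOn :
    ContinuousOn (fun p : EuclideanSpace ℝ (Fin N) × ℝ => gaussianWeight N T lam x₀ p.1 p.2)
      {p | p.2 < T + lam} := by
  have hden : Continuous fun p : EuclideanSpace ℝ (Fin N) × ℝ => T - p.2 + lam := by continuity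
  have h1 : ContinuousOn (fun p : EuclideanSpace ℝ (Fin N) × ℝ =>
      (T - p.2 + lam) ^ (-(N : ℝ) / 2)) {p | p.2 < T + lam} :=
    hden.continuousOn.rpow_const fun p hp => Or.inl
      (by simp only [Set.mem_setOf_eq] at hp; intro h; linarith)
  have h2 : ContinuousOn (fun p : EuclideanSpace ℝ (Fin N) × ℝ =>
      Real.exp (-‖p.1 - x₀‖ ^ 2 / (4 * (T - p.2 + lam)))) {p | p.2 < T + lam} := by
    apply Real.continuous_exp.comp_continuousOn
    apply ContinuousOn.div (by fun_prop) (by fun_prop)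
    intro p hp
    simp only [Set.mem_setOf_eq] at hp
    have : 0 < T - p.2 + lam := by linarith
    positivity
  exact h1.mul h2

end helpers

set_option maxHeartbeats 4000000

/-- Derivative formula for the weighted energy `H` (deterministic case of Lemma 4.1):
`H'(t) = -2 D(t) + 2 ∫ u F G_λ`. -/
theorem weighted_energy_derivative (N : ℕ) (hN : 1 ≤ N) (T lam R₀ ρ : ℝ)
    (hT : 0 < T) (hlam : 0 < lam) (hρ : ρ < R₀)
    (x₀ : EuclideanSpace ℝ (Fin N))
    (F u : EuclideanSpace ℝ (Fin N) → ℝ → ℝ)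
    (hF : ContinuousOn (fun p : EuclideanSpace ℝ (Fin N) × ℝ => F p.1 p.2)
      (Set.univ ×ˢ Set.Ioo 0 T))
    (hu : ContDiffOn ℝ (⊤ : ℕ∞) (fun p : EuclideanSpace ℝ (Fin N) × ℝ => u p.1 p.2)
      (Set.univ ×ˢ Set.Ioo 0 T))
    (hsupp : ∀ x, ∀ t ∈ Set.Ioo (0 : ℝ) T, ρ ≤ ‖x - x₀‖ → u x t = 0)
    (heq : ∀ x, ∀ t ∈ Set.Ioo (0 : ℝ) T, deriv (u x) t =
      (∑ i : Fin N, secondPartial N (fun y => u y t) i x) + F x t) :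
    ∀ t ∈ Set.Ioo (0 : ℝ) T,
      HasDerivAt
        (fun s => ∫ x in Metric.closedBall x₀ R₀, (u x s) ^ 2 * gaussianWeight N T lam x₀ x s)
        (-2 * (∫ x in Metric.closedBall x₀ R₀,
              ‖gradient (fun y => u y t) x‖ ^ 2 * gaussianWeight N T lam x₀ x t) +
          2 * ∫ x in Metric.closedBall x₀ R₀,
              u x t * F x t * gaussianWeight N T lam x₀ x t) t := by
  intro t ht
  obtain ⟨ht0, htT⟩ := ht
  have ht' : t ∈ Set.Ioo (0:ℝ) T := ⟨ht0, htT⟩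
  have hτ : 0 < T - t + lam := by linarith
  have hΩ : IsOpen ((Set.univ : Set (EuclideanSpace ℝ (Fin N))) ×ˢ Set.Ioo (0:ℝ) T) :=
    isOpen_univ.prod isOpen_Ioo
  -- smoothness of u in x at fixed times
  have hUx : ∀ s ∈ Set.Ioo (0:ℝ) T, ContDiff ℝ (⊤ : ℕ∞) (fun y : EuclideanSpace ℝ (Fin N) => u y s) := by
    intro s hs
    rw [contDiff_iff_contDiffAt]
    intro y
    have h1 : ContDiffAt ℝ (⊤ : ℕ∞) (fun p : EuclideanSpace ℝ (Fin N) × ℝ => u p.1 p.2) (y, s) :=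
      hu.contDiffAt (hΩ.mem_nhds ⟨trivial, hs⟩)
    exact h1.comp y (contDiff_id.prodMk contDiff_const).contDiffAt
  have hv : ContDiff ℝ (⊤ : ℕ∞) (fun y : EuclideanSpace ℝ (Fin N) => u y t) := hUx t ht'
  -- time derivative of u
  have hud : ∀ (x : EuclideanSpace ℝ (Fin N)), ∀ s ∈ Set.Ioo (0:ℝ) T,
      HasDerivAt (fun r => u x r)
        (fderiv ℝ (fun p : EuclideanSpace ℝ (Fin N) × ℝ => u p.1 p.2) (x, s) (0, 1)) s := by
    intro x s hs
    have hdU : DifferentiableAt ℝ (fun p : EuclideanSpace ℝ (Fin N) × ℝ => u p.1 p.2) (x, s) :=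
      (hu.contDiffAt (hΩ.mem_nhds ⟨trivial, hs⟩)).differentiableAt (by simp)
    have hc : HasDerivAt (fun r : ℝ => ((x, r) : EuclideanSpace ℝ (Fin N) × ℝ)) (0, 1) s :=
      (hasDerivAt_const s x).prodMk (hasDerivAt_id s)
    exact hdU.hasFDerivAt.comp_hasDerivAt s hc
  -- derivative of the integrand in time
  have hWd : ∀ (x : EuclideanSpace ℝ (Fin N)), ∀ s ∈ Set.Ioo (0:ℝ) T,
      HasDerivAt (fun r => u x r ^ 2 * gaussianWeight N T lam x₀ x r)
        (2 * u x s * fderiv ℝ (fun p : EuclideanSpace ℝ (Fin N) × ℝ => u p.1 p.2) (x, s) (0, 1) *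
            gaussianWeight N T lam x₀ x s +
          u x s ^ 2 * (gaussianWeight N T lam x₀ x s *
            ((N : ℝ) * (2 * (T - s + lam))⁻¹ - ‖x - x₀‖ ^ 2 * ((2 * (T - s + lam))⁻¹) ^ 2))) s := by
    intro x s hs
    have h1 := (hud x s hs).fun_pow 2
    have h2 := gw_hasDerivAt_time (T := T) (lam := lam) (x₀ := x₀) x
      (show 0 < T - s + lam by linarith [hs.2])
    have h3 := h1.fun_mul h2
    refine h3.congr_deriv ?_
    norm_num
  -- continuity of the time-derivative of u, jointly
  have hutcOn : ContinuousOn (fun p : EuclideanSpace ℝ (Fin N) × ℝ =>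
      fderiv ℝ (fun q : EuclideanSpace ℝ (Fin N) × ℝ => u q.1 q.2) p (0, 1))
      (Set.univ ×ˢ Set.Ioo 0 T) :=
    (hu.continuousOn_fderiv_of_isOpen hΩ (by simp)).clm_apply continuousOn_const
  have hgwcOn : ContinuousOn (fun p : EuclideanSpace ℝ (Fin N) × ℝ =>
      gaussianWeight N T lam x₀ p.1 p.2) (Set.univ ×ˢ Set.Ioo 0 T) :=
    gw_contOn.mono (fun p hp => show p.2 < T + lam by
      have h := hp.2.2; linarith)
  have hWc : ContinuousOn (fun p : EuclideanSpace ℝ (Fin N) × ℝ =>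
      2 * u p.1 p.2 * fderiv ℝ (fun q : EuclideanSpace ℝ (Fin N) × ℝ => u q.1 q.2) p (0, 1) *
          gaussianWeight N T lam x₀ p.1 p.2 +
        u p.1 p.2 ^ 2 * (gaussianWeight N T lam x₀ p.1 p.2 *
          ((N : ℝ) * (2 * (T - p.2 + lam))⁻¹ - ‖p.1 - x₀‖ ^ 2 * ((2 * (T - p.2 + lam))⁻¹) ^ 2)))
      (Set.univ ×ˢ Set.Ioo 0 T) := by
    have huc := hu.continuousOn
    have hinv : ContinuousOn (fun p : EuclideanSpace ℝ (Fin N) × ℝ => (2*(T - p.2 + lam))⁻¹)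
        (Set.univ ×ˢ Set.Ioo 0 T) := by
      apply ContinuousOn.inv₀ (by fun_prop)
      intro p hp
      have h2 := hp.2.2
      have : 0 < T - p.2 + lam := by linarith
      positivity
    have hnc : ContinuousOn (fun p : EuclideanSpace ℝ (Fin N) × ℝ => ‖p.1 - x₀‖ ^ 2)
        (Set.univ ×ˢ Set.Ioo 0 T) := by fun_prop
    exact (((continuousOn_const.mul huc).mul hutcOn).mul hgwcOn).add
      ((huc.pow 2).mul (hgwcOn.mul ((continuousOn_const.mul hinv).sub (hnc.mul (hinv.pow 2)))))
  -- choose a time window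
  set ε := min t (T - t) / 2 with hεdef
  have hεt : ε ≤ t / 2 := by
    rw [hεdef]; have := min_le_left t (T - t); linarith
  have hεT : ε ≤ (T - t) / 2 := by
    rw [hεdef]; have := min_le_right t (T - t); linarith
  have hε : 0 < ε := by
    rw [hεdef]; have := lt_min ht0 (show (0:ℝ) < T - t by linarith); linarith
  have hIcc : Set.Icc (t - ε) (t + ε) ⊆ Set.Ioo (0:ℝ) T := by
    intro s hs
    obtain ⟨h1, h2⟩ := hs
    exact ⟨by linarith, by linarith⟩
  have hball : Metric.ball t ε ⊆ Set.Icc (t - ε) (t + ε) := by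
    intro s hs
    rw [Metric.mem_ball, Real.dist_eq, abs_lt] at hs
    exact ⟨by linarith [hs.1], by linarith [hs.2]⟩
  have hK : IsCompact (Metric.closedBall x₀ R₀ ×ˢ Set.Icc (t - ε) (t + ε)) :=
    (isCompact_closedBall _ _).prod isCompact_Icc
  have hKΩ : Metric.closedBall x₀ R₀ ×ˢ Set.Icc (t - ε) (t + ε) ⊆
      (Set.univ : Set (EuclideanSpace ℝ (Fin N))) ×ˢ Set.Ioo (0:ℝ) T :=
    fun p hp => ⟨trivial, hIcc hp.2⟩
  obtain ⟨C, hC⟩ := hK.exists_bound_of_continuousOn (hWc.mono hKΩ)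
  -- the differentiation under the integral sign
  have hmeas : ∀ᶠ s in nhds t, AEStronglyMeasurable
      (fun x : EuclideanSpace ℝ (Fin N) => u x s ^ 2 * gaussianWeight N T lam x₀ x s)
      (volume.restrict (Metric.closedBall x₀ R₀)) := by
    filter_upwards [isOpen_Ioo.mem_nhds ht'] with s hs
    exact (((hUx s hs).continuous.pow 2).mul
      (gw_diff (show 0 < T - s + lam by linarith [hs.2])).continuous).aestronglyMeasurable.restrict
  have hint : Integrable (fun x : EuclideanSpace ℝ (Fin N) => u x t ^ 2 * gaussianWeight N T lam x₀ x t)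
      (volume.restrict (Metric.closedBall x₀ R₀)) :=
    (((hv.continuous.pow 2).mul
      (gw_diff hτ).continuous).continuousOn).integrableOn_compact (isCompact_closedBall x₀ R₀)
  have hWtc : Continuous (fun x : EuclideanSpace ℝ (Fin N) =>
      2 * u x t * fderiv ℝ (fun p : EuclideanSpace ℝ (Fin N) × ℝ => u p.1 p.2) (x, t) (0, 1) *
          gaussianWeight N T lam x₀ x t +
        u x t ^ 2 * (gaussianWeight N T lam x₀ x t *
          ((N : ℝ) * (2 * (T - t + lam))⁻¹ - ‖x - x₀‖ ^ 2 * ((2 * (T - t + lam))⁻¹) ^ 2))) := by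
    rw [← continuousOn_univ]
    have hco : ContinuousOn (fun x : EuclideanSpace ℝ (Fin N) =>
        ((x, t) : EuclideanSpace ℝ (Fin N) × ℝ)) Set.univ :=
      (continuous_id.prodMk continuous_const).continuousOn
    exact hWc.comp hco (fun x _ => ⟨trivial, ht'⟩)
  have hmeas' : AEStronglyMeasurable (fun x : EuclideanSpace ℝ (Fin N) =>
      2 * u x t * fderiv ℝ (fun p : EuclideanSpace ℝ (Fin N) × ℝ => u p.1 p.2) (x, t) (0, 1) *
          gaussianWeight N T lam x₀ x t +
        u x t ^ 2 * (gaussianWeight N T lam x₀ x t *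
          ((N : ℝ) * (2 * (T - t + lam))⁻¹ - ‖x - x₀‖ ^ 2 * ((2 * (T - t + lam))⁻¹) ^ 2)))
      (volume.restrict (Metric.closedBall x₀ R₀)) :=
    hWtc.aestronglyMeasurable.restrict
  have hbound : ∀ᵐ x ∂(volume.restrict (Metric.closedBall x₀ R₀)), ∀ s ∈ Metric.ball t ε,
      ‖2 * u x s * fderiv ℝ (fun p : EuclideanSpace ℝ (Fin N) × ℝ => u p.1 p.2) (x, s) (0, 1) *
          gaussianWeight N T lam x₀ x s +
        u x s ^ 2 * (gaussianWeight N T lam x₀ x s *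
          ((N : ℝ) * (2 * (T - s + lam))⁻¹ - ‖x - x₀‖ ^ 2 * ((2 * (T - s + lam))⁻¹) ^ 2))‖ ≤ C := by
    filter_upwards [self_mem_ae_restrict (measurableSet_closedBall)] with x hx s hs
    exact hC (x, s) ⟨hx, hball hs⟩
  have hbint : Integrable (fun _ : EuclideanSpace ℝ (Fin N) => C)
      (volume.restrict (Metric.closedBall x₀ R₀)) :=
    integrableOn_const measure_closedBall_lt_top.ne
  have hdiff : ∀ᵐ x ∂(volume.restrict (Metric.closedBall x₀ R₀)), ∀ s ∈ Metric.ball t ε,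
      HasDerivAt (fun r => u x r ^ 2 * gaussianWeight N T lam x₀ x r)
        (2 * u x s * fderiv ℝ (fun p : EuclideanSpace ℝ (Fin N) × ℝ => u p.1 p.2) (x, s) (0, 1) *
            gaussianWeight N T lam x₀ x s +
          u x s ^ 2 * (gaussianWeight N T lam x₀ x s *
            ((N : ℝ) * (2 * (T - s + lam))⁻¹ - ‖x - x₀‖ ^ 2 * ((2 * (T - s + lam))⁻¹) ^ 2))) s :=
    Filter.Eventually.of_forall fun x s hs => hWd x s (hIcc (hball hs))
  have key := (hasDerivAt_integral_of_dominated_loc_of_deriv_le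
    (μ := volume.restrict (Metric.closedBall x₀ R₀))
    (F := fun s x => u x s ^ 2 * gaussianWeight N T lam x₀ x s)
    (F' := fun s x =>
      2 * u x s * fderiv ℝ (fun p : EuclideanSpace ℝ (Fin N) × ℝ => u p.1 p.2) (x, s) (0, 1) *
          gaussianWeight N T lam x₀ x s +
        u x s ^ 2 * (gaussianWeight N T lam x₀ x s *
          ((N : ℝ) * (2 * (T - s + lam))⁻¹ - ‖x - x₀‖ ^ 2 * ((2 * (T - s + lam))⁻¹) ^ 2)))
    (x₀ := t) (s := Metric.ball t ε) (bound := fun _ => C) (Metric.ball_mem_nhds t hε) hmeas hint hmeas' hbound hbint hdiff).2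
  -- it remains to identify the value of the derivative
  suffices hfinal : (∫ x in Metric.closedBall x₀ R₀,
      (2 * u x t * fderiv ℝ (fun p : EuclideanSpace ℝ (Fin N) × ℝ => u p.1 p.2) (x, t) (0, 1) *
          gaussianWeight N T lam x₀ x t +
        u x t ^ 2 * (gaussianWeight N T lam x₀ x t *
          ((N : ℝ) * (2 * (T - t + lam))⁻¹ - ‖x - x₀‖ ^ 2 * ((2 * (T - t + lam))⁻¹) ^ 2)))) =
      -2 * (∫ x in Metric.closedBall x₀ R₀,
          ‖gradient (fun y => u y t) x‖ ^ 2 * gaussianWeight N T lam x₀ x t) +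
        2 * ∫ x in Metric.closedBall x₀ R₀,
          u x t * F x t * gaussianWeight N T lam x₀ x t by
    rwa [hfinal] at key
  -- support properties
  have hS : IsOpen {y : EuclideanSpace ℝ (Fin N) | ρ < ‖y - x₀‖} :=
    isOpen_lt continuous_const ((continuous_id.sub continuous_const).norm)
  have hv0 : ∀ y, ρ ≤ ‖y - x₀‖ → u y t = 0 := fun y hy => hsupp y t ht' hy
  have hfd0 : ∀ y, ρ < ‖y - x₀‖ → fderiv ℝ (fun z => u z t) y = 0 := by
    intro y hy
    have hev : (fun z => u z t) =ᶠ[nhds y] (fun _ => (0:ℝ)) := by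
      filter_upwards [hS.mem_nhds hy] with z hz
      exact hv0 z (le_of_lt hz)
    rw [hev.fderiv_eq]
    exact fderiv_const_apply 0
  have hsp0 : ∀ (i : Fin N) y, ρ < ‖y - x₀‖ → secondPartial N (fun z => u z t) i y = 0 := by
    intro i y hy
    have hev : (fun z => fderiv ℝ (fun w => u w t) z (EuclideanSpace.single i 1))
        =ᶠ[nhds y] (fun _ => (0:ℝ)) := by
      filter_upwards [hS.mem_nhds hy] with z hz
      rw [hfd0 z hz]
      rfl
    rw [secondPartial, hev.fderiv_eq, fderiv_const_apply 0]
    rfl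
  have houtK : ∀ y ∉ Metric.closedBall x₀ |ρ|, ρ < ‖y - x₀‖ := by
    intro y hy
    rw [Metric.mem_closedBall, not_le, dist_eq_norm] at hy
    exact lt_of_le_of_lt (le_abs_self ρ) hy
  have hInt : ∀ f : EuclideanSpace ℝ (Fin N) → ℝ, Continuous f →
      (∀ y, ρ < ‖y - x₀‖ → f y = 0) → Integrable f := fun f hc h0 =>
    hc.integrable_of_hasCompactSupport
      (HasCompactSupport.intro (isCompact_closedBall x₀ |ρ|) fun y hy => h0 y (houtK y hy))
  -- continuity collection
  have hvc : Continuous (fun y => u y t) := hv.continuous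
  have hvicd : ∀ i : Fin N, ContDiff ℝ (⊤ : ℕ∞)
      (fun y => fderiv ℝ (fun z => u z t) y (EuclideanSpace.single i 1)) :=
    fun i => (hv.fderiv_right (m := (⊤ : ℕ∞)) (by simp)).clm_apply contDiff_const
  have hvic : ∀ i : Fin N, Continuous
      (fun y => fderiv ℝ (fun z => u z t) y (EuclideanSpace.single i 1)) :=
    fun i => (hvicd i).continuous
  have hspc : ∀ i : Fin N, Continuous (fun y => secondPartial N (fun z => u z t) i y) := by
    intro i
    unfold secondPartial
    exact (((hvicd i).fderiv_right (m := (⊤ : ℕ∞)) (by simp)).clm_apply contDiff_const).continuous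
  have hgc : Continuous (fun y => gaussianWeight N T lam x₀ y t) := (gw_diff hτ).continuous
  have hFtc : Continuous (fun y => F y t) := by
    rw [← continuousOn_univ]
    exact hF.comp ((continuous_id.prodMk continuous_const).continuousOn :
      ContinuousOn (fun y : EuclideanSpace ℝ (Fin N) =>
        ((y, t) : EuclideanSpace ℝ (Fin N) × ℝ)) Set.univ) (fun y _ => ⟨trivial, ht'⟩)
  have hutc : Continuous (fun y : EuclideanSpace ℝ (Fin N) =>
      fderiv ℝ (fun p : EuclideanSpace ℝ (Fin N) × ℝ => u p.1 p.2) (y, t) (0, 1)) := by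
    rw [← continuousOn_univ]
    exact hutcOn.comp ((continuous_id.prodMk continuous_const).continuousOn :
      ContinuousOn (fun y : EuclideanSpace ℝ (Fin N) =>
        ((y, t) : EuclideanSpace ℝ (Fin N) × ℝ)) Set.univ) (fun y _ => ⟨trivial, ht'⟩)
  -- fderiv product formulas
  have hvsq : ∀ (y) (w : EuclideanSpace ℝ (Fin N)), fderiv ℝ (fun z => u z t ^ 2) y w =
      2 * u y t * fderiv ℝ (fun z => u z t) y w := by
    intro y w
    have hd := ((hv.differentiable (by simp)) y).hasFDerivAt
    have hfun : (fun z => u z t ^ 2) = fun z => u z t * u z t := by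
      funext z; ring
    have h2 : HasFDerivAt (fun z => u z t ^ 2) ((2 * u y t) • fderiv ℝ (fun z => u z t) y) y := by
      rw [hfun]
      simpa [two_mul, add_smul, mul_smul] using hd.fun_mul hd
    rw [h2.fderiv]
    simp [mul_assoc]
  have hwfd : ∀ (i : Fin N) y, fderiv ℝ (fun z => 2 * u z t *
        fderiv ℝ (fun w => u w t) z (EuclideanSpace.single i 1)) y (EuclideanSpace.single i 1) =
      2 * ((fderiv ℝ (fun z => u z t) y (EuclideanSpace.single i 1)) ^ 2 +
        u y t * secondPartial N (fun z => u z t) i y) := by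
    intro i y
    have hdv : DifferentiableAt ℝ (fun z => u z t) y := (hv.differentiable (by simp)) y
    have hdvi : DifferentiableAt ℝ
        (fun z => fderiv ℝ (fun w => u w t) z (EuclideanSpace.single i 1)) y :=
      ((hvicd i).differentiable (by simp)) y
    have h1 : (fun z => 2 * u z t * fderiv ℝ (fun w => u w t) z (EuclideanSpace.single i 1)) =
        fun z => 2 * (u z t * fderiv ℝ (fun w => u w t) z (EuclideanSpace.single i 1)) := by
      funext z; ring
    rw [h1, fderiv_const_mul (hdv.fun_mul hdvi) 2, fderiv_fun_mul hdv hdvi]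
    simp only [ContinuousLinearMap.smul_apply, ContinuousLinearMap.add_apply, smul_eq_mul,
      secondPartial]
    ring
  -- gradient formula
  have hgradsq : ∀ y, ‖gradient (fun z => u z t) y‖ ^ 2 =
      ∑ i : Fin N, (fderiv ℝ (fun z => u z t) y (EuclideanSpace.single i 1)) ^ 2 := by
    intro y
    have hd : DifferentiableAt ℝ (fun z => u z t) y := (hv.differentiable (by simp)) y
    have hf : HasFDerivAt (fun z => u z t)
        ((InnerProductSpace.toDual ℝ _) (gradient (fun z => u z t) y)) y :=
      hasGradientAt_iff_hasFDerivAt.mp hd.hasGradientAt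
    have happ : ∀ i : Fin N, fderiv ℝ (fun z => u z t) y (EuclideanSpace.single i 1) =
        gradient (fun z => u z t) y i := by
      intro i
      rw [hf.fderiv, InnerProductSpace.toDual_apply_apply, EuclideanSpace.inner_single_right]
      simp
    rw [esum_norm_sq]
    exact Finset.sum_congr rfl fun i _ => by rw [happ i]
  have hvi0 : ∀ (i : Fin N) y, ρ < ‖y - x₀‖ →
      fderiv ℝ (fun z => u z t) y (EuclideanSpace.single i 1) = 0 := by
    intro i y hy; rw [hfd0 y hy]; rfl
  have hprojc : ∀ i : Fin N, Continuous (fun y : EuclideanSpace ℝ (Fin N) => y i - x₀ i) :=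
    fun i => ((EuclideanSpace.proj (𝕜 := ℝ) i).continuous).sub continuous_const
  have hgid : ∀ i : Fin N, Differentiable ℝ (fun y : EuclideanSpace ℝ (Fin N) =>
      gaussianWeight N T lam x₀ y t * (-(2 * (T - t + lam))⁻¹ * (y i - x₀ i))) := by
    intro i
    apply (gw_diff hτ).mul
    apply Differentiable.const_mul
    exact ((EuclideanSpace.proj (𝕜 := ℝ) i).differentiable).sub_const (x₀ i)
  have hgicont : ∀ i : Fin N, Continuous (fun y : EuclideanSpace ℝ (Fin N) =>
      gaussianWeight N T lam x₀ y t * (-(2 * (T - t + lam))⁻¹ * (y i - x₀ i))) :=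
    fun i => (hgid i).continuous
  have key_i : ∀ i : Fin N,
      (∫ y, u y t ^ 2 * (gaussianWeight N T lam x₀ y t *
          (((2 * (T - t + lam))⁻¹) ^ 2 * (y i - x₀ i) ^ 2 - (2 * (T - t + lam))⁻¹))) =
      ∫ y, 2 * ((fderiv ℝ (fun z => u z t) y (EuclideanSpace.single i 1)) ^ 2 +
          u y t * secondPartial N (fun z => u z t) i y) * gaussianWeight N T lam x₀ y t := by
    intro i
    have e1 : (fun y => u y t ^ 2 * (gaussianWeight N T lam x₀ y t *
        (((2 * (T - t + lam))⁻¹) ^ 2 * (y i - x₀ i) ^ 2 - (2 * (T - t + lam))⁻¹))) =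
        fun y => u y t ^ 2 * fderiv ℝ (fun z => gaussianWeight N T lam x₀ z t *
          (-(2 * (T - t + lam))⁻¹ * (z i - x₀ i))) y (EuclideanSpace.single i 1) := by
      funext y; rw [gw_second hτ y i]
    have e2 : (fun y => fderiv ℝ (fun z => u z t ^ 2) y (EuclideanSpace.single i 1) *
        (gaussianWeight N T lam x₀ y t * (-(2 * (T - t + lam))⁻¹ * (y i - x₀ i)))) =
        fun y => (2 * u y t * fderiv ℝ (fun z => u z t) y (EuclideanSpace.single i 1)) *
          (gaussianWeight N T lam x₀ y t * (-(2 * (T - t + lam))⁻¹ * (y i - x₀ i))) := by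
      funext y; rw [hvsq y _]
    have e3 : (fun y => (2 * u y t * fderiv ℝ (fun z => u z t) y (EuclideanSpace.single i 1)) *
        (gaussianWeight N T lam x₀ y t * (-(2 * (T - t + lam))⁻¹ * (y i - x₀ i)))) =
        fun y => (2 * u y t * fderiv ℝ (fun z => u z t) y (EuclideanSpace.single i 1)) *
          fderiv ℝ (fun z => gaussianWeight N T lam x₀ z t) y (EuclideanSpace.single i 1) := by
      funext y; rw [gw_fderiv_apply hτ y i]
    have e4 : (fun y => fderiv ℝ (fun z => 2 * u z t *
        fderiv ℝ (fun w => u w t) z (EuclideanSpace.single i 1)) y (EuclideanSpace.single i 1) *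
        gaussianWeight N T lam x₀ y t) =
        fun y => 2 * ((fderiv ℝ (fun z => u z t) y (EuclideanSpace.single i 1)) ^ 2 +
          u y t * secondPartial N (fun z => u z t) i y) * gaussianWeight N T lam x₀ y t := by
      funext y; rw [hwfd i y]
    have I1 : Integrable (fun y => fderiv ℝ (fun z => u z t ^ 2) y (EuclideanSpace.single i 1) *
        (gaussianWeight N T lam x₀ y t * (-(2 * (T - t + lam))⁻¹ * (y i - x₀ i)))) := by
      rw [e2]
      refine hInt _ (((continuous_const.mul hvc).mul (hvic i)).mul (hgicont i)) ?_
      intro y hy; rw [hv0 y (le_of_lt hy)]; ring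
    have I2 : Integrable (fun y => u y t ^ 2 *
        fderiv ℝ (fun z => gaussianWeight N T lam x₀ z t *
          (-(2 * (T - t + lam))⁻¹ * (z i - x₀ i))) y (EuclideanSpace.single i 1)) := by
      rw [← e1]
      refine hInt _ ((hvc.pow 2).mul (hgc.mul ((continuous_const.mul
        ((hprojc i).pow 2)).sub continuous_const))) ?_
      intro y hy; rw [hv0 y (le_of_lt hy)]; ring
    have I3 : Integrable (fun y => u y t ^ 2 * (gaussianWeight N T lam x₀ y t *
        (-(2 * (T - t + lam))⁻¹ * (y i - x₀ i)))) := by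
      refine hInt _ ((hvc.pow 2).mul (hgicont i)) ?_
      intro y hy; rw [hv0 y (le_of_lt hy)]; ring
    have D1 : Differentiable ℝ (fun y => u y t ^ 2) := (hv.pow 2).differentiable (by simp)
    have ibp1 := integral_mul_fderiv_eq_neg_fderiv_mul_of_integrable I1 I2 I3 (fun x _ => D1 x) (fun x _ => hgid i x)
    have I4 : Integrable (fun y => fderiv ℝ (fun z => 2 * u z t *
        fderiv ℝ (fun w => u w t) z (EuclideanSpace.single i 1)) y (EuclideanSpace.single i 1) *
        gaussianWeight N T lam x₀ y t) := by
      rw [e4]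
      refine hInt _ ((continuous_const.mul (((hvic i).pow 2).add (hvc.mul (hspc i)))).mul hgc) ?_
      intro y hy
      rw [hv0 y (le_of_lt hy), hvi0 i y hy, hsp0 i y hy]; ring
    have I5 : Integrable (fun y =>
        (2 * u y t * fderiv ℝ (fun z => u z t) y (EuclideanSpace.single i 1)) *
        fderiv ℝ (fun z => gaussianWeight N T lam x₀ z t) y (EuclideanSpace.single i 1)) := by
      rw [← e3]
      refine hInt _ (((continuous_const.mul hvc).mul (hvic i)).mul (hgicont i)) ?_
      intro y hy; rw [hv0 y (le_of_lt hy)]; ring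
    have I6 : Integrable (fun y =>
        (2 * u y t * fderiv ℝ (fun z => u z t) y (EuclideanSpace.single i 1)) *
        gaussianWeight N T lam x₀ y t) := by
      refine hInt _ (((continuous_const.mul hvc).mul (hvic i)).mul hgc) ?_
      intro y hy; rw [hv0 y (le_of_lt hy)]; ring
    have D2 : Differentiable ℝ (fun z => 2 * u z t *
        fderiv ℝ (fun w => u w t) z (EuclideanSpace.single i 1)) :=
      ((hv.differentiable (by simp)).const_mul 2).mul ((hvicd i).differentiable (by simp))
    have ibp2 := integral_mul_fderiv_eq_neg_fderiv_mul_of_integrable I4 I5 I6 (fun x _ => D2 x) (fun x _ => gw_diff hτ x)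
    calc (∫ y, u y t ^ 2 * (gaussianWeight N T lam x₀ y t *
          (((2 * (T - t + lam))⁻¹) ^ 2 * (y i - x₀ i) ^ 2 - (2 * (T - t + lam))⁻¹)))
        = ∫ y, u y t ^ 2 * fderiv ℝ (fun z => gaussianWeight N T lam x₀ z t *
            (-(2 * (T - t + lam))⁻¹ * (z i - x₀ i))) y (EuclideanSpace.single i 1) := by rw [e1]
      _ = - ∫ y, fderiv ℝ (fun z => u z t ^ 2) y (EuclideanSpace.single i 1) *
            (gaussianWeight N T lam x₀ y t * (-(2 * (T - t + lam))⁻¹ * (y i - x₀ i))) := ibp1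
      _ = - ∫ y, (2 * u y t * fderiv ℝ (fun z => u z t) y (EuclideanSpace.single i 1)) *
            (gaussianWeight N T lam x₀ y t * (-(2 * (T - t + lam))⁻¹ * (y i - x₀ i))) := by rw [e2]
      _ = - ∫ y, (2 * u y t * fderiv ℝ (fun z => u z t) y (EuclideanSpace.single i 1)) *
            fderiv ℝ (fun z => gaussianWeight N T lam x₀ z t) y (EuclideanSpace.single i 1) := by
            rw [e3]
      _ = - - ∫ y, fderiv ℝ (fun z => 2 * u z t *
            fderiv ℝ (fun w => u w t) z (EuclideanSpace.single i 1)) y (EuclideanSpace.single i 1) *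
            gaussianWeight N T lam x₀ y t := by rw [ibp2]
      _ = ∫ y, 2 * ((fderiv ℝ (fun z => u z t) y (EuclideanSpace.single i 1)) ^ 2 +
            u y t * secondPartial N (fun z => u z t) i y) * gaussianWeight N T lam x₀ y t := by
            rw [neg_neg, e4]
  -- outside the big ball everything vanishes
  have hRρ : ∀ x ∉ Metric.closedBall x₀ R₀, ρ < ‖x - x₀‖ := by
    intro x hx
    rw [Metric.mem_closedBall, not_le, dist_eq_norm] at hx
    linarith
  have hs1 : (∫ x in Metric.closedBall x₀ R₀,
      (2 * u x t * fderiv ℝ (fun p : EuclideanSpace ℝ (Fin N) × ℝ => u p.1 p.2) (x, t) (0, 1) *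
          gaussianWeight N T lam x₀ x t +
        u x t ^ 2 * (gaussianWeight N T lam x₀ x t *
          ((N : ℝ) * (2 * (T - t + lam))⁻¹ - ‖x - x₀‖ ^ 2 * ((2 * (T - t + lam))⁻¹) ^ 2)))) =
      ∫ x, (2 * u x t * fderiv ℝ (fun p : EuclideanSpace ℝ (Fin N) × ℝ => u p.1 p.2) (x, t) (0, 1) *
          gaussianWeight N T lam x₀ x t +
        u x t ^ 2 * (gaussianWeight N T lam x₀ x t *
          ((N : ℝ) * (2 * (T - t + lam))⁻¹ - ‖x - x₀‖ ^ 2 * ((2 * (T - t + lam))⁻¹) ^ 2))) := by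
    apply setIntegral_eq_integral_of_forall_compl_eq_zero
    intro x hx
    rw [hv0 x (le_of_lt (hRρ x hx))]
    ring
  have hs2 : (∫ x in Metric.closedBall x₀ R₀,
      ‖gradient (fun y => u y t) x‖ ^ 2 * gaussianWeight N T lam x₀ x t) =
      ∫ x, ‖gradient (fun y => u y t) x‖ ^ 2 * gaussianWeight N T lam x₀ x t := by
    apply setIntegral_eq_integral_of_forall_compl_eq_zero
    intro x hx
    have hev : (fun y => u y t) =ᶠ[nhds x] (fun _ => (0:ℝ)) := by
      filter_upwards [hS.mem_nhds (hRρ x hx)] with z hz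
      exact hv0 z (le_of_lt hz)
    rw [hev.gradient_eq, gradient_fun_const]
    simp
  have hs3 : (∫ x in Metric.closedBall x₀ R₀,
      u x t * F x t * gaussianWeight N T lam x₀ x t) =
      ∫ x, u x t * F x t * gaussianWeight N T lam x₀ x t := by
    apply setIntegral_eq_integral_of_forall_compl_eq_zero
    intro x hx
    rw [hv0 x (le_of_lt (hRρ x hx))]
    ring
  rw [hs1, hs2, hs3]
  -- pointwise rewriting of the time derivative using the PDE
  have hWt_eq : (fun x => 2 * u x t *
      fderiv ℝ (fun p : EuclideanSpace ℝ (Fin N) × ℝ => u p.1 p.2) (x, t) (0, 1) *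
          gaussianWeight N T lam x₀ x t +
        u x t ^ 2 * (gaussianWeight N T lam x₀ x t *
          ((N : ℝ) * (2 * (T - t + lam))⁻¹ - ‖x - x₀‖ ^ 2 * ((2 * (T - t + lam))⁻¹) ^ 2))) =
      fun x => (2 * u x t * (∑ i : Fin N, secondPartial N (fun z => u z t) i x) *
          gaussianWeight N T lam x₀ x t +
        2 * u x t * F x t * gaussianWeight N T lam x₀ x t) +
        u x t ^ 2 * (gaussianWeight N T lam x₀ x t *
          ((N : ℝ) * (2 * (T - t + lam))⁻¹ - ‖x - x₀‖ ^ 2 * ((2 * (T - t + lam))⁻¹) ^ 2)) := by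
    funext x
    rw [← (hud x t ht').deriv, heq x t ht']
    ring
  -- integrabilities for the splitting
  have hIA1 : Integrable (fun x => 2 * u x t *
      (∑ i : Fin N, secondPartial N (fun z => u z t) i x) * gaussianWeight N T lam x₀ x t) := by
    refine hInt _ (((continuous_const.mul hvc).mul
      (continuous_finset_sum Finset.univ fun i _ => hspc i)).mul hgc) ?_
    intro y hy; rw [hv0 y (le_of_lt hy)]; ring
  have hIA2 : Integrable (fun x => 2 * u x t * F x t * gaussianWeight N T lam x₀ x t) := by
    refine hInt _ (((continuous_const.mul hvc).mul hFtc).mul hgc) ?_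
    intro y hy; rw [hv0 y (le_of_lt hy)]; ring
  have hIA3 : Integrable (fun x => u x t ^ 2 * (gaussianWeight N T lam x₀ x t *
      ((N : ℝ) * (2 * (T - t + lam))⁻¹ - ‖x - x₀‖ ^ 2 * ((2 * (T - t + lam))⁻¹) ^ 2))) := by
    refine hInt _ ((hvc.pow 2).mul (hgc.mul (continuous_const.sub
      ((((continuous_id.sub continuous_const).norm).pow 2).mul continuous_const)))) ?_
    intro y hy; rw [hv0 y (le_of_lt hy)]; ring
  have hIE1 : ∀ i : Fin N, Integrable (fun x => u x t ^ 2 * (gaussianWeight N T lam x₀ x t *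
      (((2 * (T - t + lam))⁻¹) ^ 2 * (x i - x₀ i) ^ 2 - (2 * (T - t + lam))⁻¹))) := by
    intro i
    refine hInt _ ((hvc.pow 2).mul (hgc.mul ((continuous_const.mul
      ((hprojc i).pow 2)).sub continuous_const))) ?_
    intro y hy; rw [hv0 y (le_of_lt hy)]; ring
  have hIR : ∀ i : Fin N, Integrable (fun y =>
      2 * ((fderiv ℝ (fun z => u z t) y (EuclideanSpace.single i 1)) ^ 2 +
        u y t * secondPartial N (fun z => u z t) i y) * gaussianWeight N T lam x₀ y t) := by
    intro i
    refine hInt _ ((continuous_const.mul (((hvic i).pow 2).add (hvc.mul (hspc i)))).mul hgc) ?_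
    intro y hy
    rw [hv0 y (le_of_lt hy), hvi0 i y hy, hsp0 i y hy]; ring
  have hIQ1 : Integrable (fun y => 2 * ((∑ i : Fin N,
      (fderiv ℝ (fun z => u z t) y (EuclideanSpace.single i 1)) ^ 2) *
      gaussianWeight N T lam x₀ y t)) := by
    refine hInt _ (continuous_const.mul ((continuous_finset_sum Finset.univ
      fun i _ => (hvic i).pow 2).mul hgc)) ?_
    intro y hy
    have : ∀ i : Fin N, fderiv ℝ (fun z => u z t) y (EuclideanSpace.single i 1) = 0 :=
      fun i => hvi0 i y hy
    simp [this]
  -- A3 as a sum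
  have hA3eq : (fun x => u x t ^ 2 * (gaussianWeight N T lam x₀ x t *
      ((N : ℝ) * (2 * (T - t + lam))⁻¹ - ‖x - x₀‖ ^ 2 * ((2 * (T - t + lam))⁻¹) ^ 2))) =
      fun x => -∑ i : Fin N, u x t ^ 2 * (gaussianWeight N T lam x₀ x t *
        (((2 * (T - t + lam))⁻¹) ^ 2 * (x i - x₀ i) ^ 2 - (2 * (T - t + lam))⁻¹)) := by
    funext x
    have hn : ‖x - x₀‖ ^ 2 = ∑ i : Fin N, (x i - x₀ i) ^ 2 := by
      rw [esum_norm_sq (x - x₀)]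
      exact Finset.sum_congr rfl fun i _ => by rw [PiLp.sub_apply]
    rw [hn]
    rw [Finset.sum_congr rfl (fun i (_ : i ∈ Finset.univ) =>
      show u x t ^ 2 * (gaussianWeight N T lam x₀ x t *
        (((2 * (T - t + lam))⁻¹) ^ 2 * (x i - x₀ i) ^ 2 - (2 * (T - t + lam))⁻¹)) =
        u x t ^ 2 * gaussianWeight N T lam x₀ x t * ((2 * (T - t + lam))⁻¹) ^ 2 *
          (x i - x₀ i) ^ 2 -
        u x t ^ 2 * gaussianWeight N T lam x₀ x t * (2 * (T - t + lam))⁻¹ from by ring)]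
    rw [Finset.sum_sub_distrib, ← Finset.mul_sum, Finset.sum_const, Finset.card_univ,
      Fintype.card_fin, nsmul_eq_mul]
    ring
  -- the sum of the integrated-by-parts identities
  have hpt : ∀ y, (∑ i : Fin N,
      2 * ((fderiv ℝ (fun z => u z t) y (EuclideanSpace.single i 1)) ^ 2 +
        u y t * secondPartial N (fun z => u z t) i y) * gaussianWeight N T lam x₀ y t) =
      2 * ((∑ i : Fin N, (fderiv ℝ (fun z => u z t) y (EuclideanSpace.single i 1)) ^ 2) *
        gaussianWeight N T lam x₀ y t) +
      2 * u y t * (∑ i : Fin N, secondPartial N (fun z => u z t) i y) *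
        gaussianWeight N T lam x₀ y t := by
    intro y
    rw [Finset.sum_congr rfl (fun i (_ : i ∈ Finset.univ) =>
      show 2 * ((fderiv ℝ (fun z => u z t) y (EuclideanSpace.single i 1)) ^ 2 +
          u y t * secondPartial N (fun z => u z t) i y) * gaussianWeight N T lam x₀ y t =
        (2 * gaussianWeight N T lam x₀ y t) *
          (fderiv ℝ (fun z => u z t) y (EuclideanSpace.single i 1)) ^ 2 +
        (2 * u y t * gaussianWeight N T lam x₀ y t) *
          secondPartial N (fun z => u z t) i y from by ring)]
    rw [Finset.sum_add_distrib, ← Finset.mul_sum, ← Finset.mul_sum]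
    ring
  have hsum : (∑ i : Fin N, ∫ x, u x t ^ 2 * (gaussianWeight N T lam x₀ x t *
      (((2 * (T - t + lam))⁻¹) ^ 2 * (x i - x₀ i) ^ 2 - (2 * (T - t + lam))⁻¹))) =
      (∫ y, 2 * ((∑ i : Fin N,
        (fderiv ℝ (fun z => u z t) y (EuclideanSpace.single i 1)) ^ 2) *
        gaussianWeight N T lam x₀ y t)) +
      ∫ y, 2 * u y t * (∑ i : Fin N, secondPartial N (fun z => u z t) i y) *
        gaussianWeight N T lam x₀ y t := by
    rw [Finset.sum_congr rfl fun i _ => key_i i]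
    rw [← integral_finset_sum Finset.univ fun i _ => hIR i]
    rw [show (fun y => ∑ i : Fin N,
        2 * ((fderiv ℝ (fun z => u z t) y (EuclideanSpace.single i 1)) ^ 2 +
          u y t * secondPartial N (fun z => u z t) i y) * gaussianWeight N T lam x₀ y t) =
        fun y => 2 * ((∑ i : Fin N,
          (fderiv ℝ (fun z => u z t) y (EuclideanSpace.single i 1)) ^ 2) *
          gaussianWeight N T lam x₀ y t) +
        2 * u y t * (∑ i : Fin N, secondPartial N (fun z => u z t) i y) *
          gaussianWeight N T lam x₀ y t from funext hpt]
    have hIQA : Integrable (fun y => 2 * ((∑ i : Fin N,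
        (fderiv ℝ (fun z => u z t) y (EuclideanSpace.single i 1)) ^ 2) *
        gaussianWeight N T lam x₀ y t)) := hIQ1
    exact integral_add hIQA hIA1
  -- put everything together
  rw [hWt_eq]
  have hIA12 : Integrable (fun x => 2 * u x t *
      (∑ i : Fin N, secondPartial N (fun z => u z t) i x) * gaussianWeight N T lam x₀ x t +
      2 * u x t * F x t * gaussianWeight N T lam x₀ x t) := hIA1.add hIA2
  rw [integral_add hIA12 hIA3, integral_add hIA1 hIA2]
  rw [hA3eq, integral_neg, integral_finset_sum Finset.univ fun i _ => hIE1 i, hsum]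
  -- express the quadratic gradient term
  have hQ : (∫ y, 2 * ((∑ i : Fin N,
      (fderiv ℝ (fun z => u z t) y (EuclideanSpace.single i 1)) ^ 2) *
      gaussianWeight N T lam x₀ y t)) =
      2 * ∫ x, ‖gradient (fun y => u y t) x‖ ^ 2 * gaussianWeight N T lam x₀ x t := by
    rw [integral_const_mul]
    congr 1
    apply integral_congr_ae
    apply Filter.Eventually.of_forall
    intro y
    exact congrArg (fun z => z * gaussianWeight N T lam x₀ y t) (hgradsq y).symm
  have hP : (∫ x, 2 * u x t * F x t * gaussianWeight N T lam x₀ x t) =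
      2 * ∫ x, u x t * F x t * gaussianWeight N T lam x₀ x t := by
    rw [show (fun x => 2 * u x t * F x t * gaussianWeight N T lam x₀ x t) =
      fun x => 2 * (u x t * F x t * gaussianWeight N T lam x₀ x t) from funext fun x => by ring]
    exact integral_const_mul 2 _
  rw [hQ, hP]
  ring
end

section
/- Let N ≥ 1, x₀ ∈ ℝ^N, λ > 0, R₀ > 0 and 0 < r ≤ R₀, and let u : ℝ^N → ℝ be continuously differentiable on a neighborhood of the closed ball B_{R₀}(x₀). Then ∫_{B_{R₀}(x₀)} u(x)² e^{−‖x−x₀‖²/(4λ)} dx ≤ (16λ/r²) · [ (N/4) ∫_{B_{R₀}(x₀)} u(x)² e^{−‖x−x₀‖²/(4λ)} dx + λ ∫_{B_{R₀}(x₀)} ‖∇u(x)‖² e^{−‖x−x₀‖²/(4λ)} dx ] + ∫_{B_r(x₀)} u(x)² e^{−‖x−x₀‖²/(4λ)} dx. -/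
/-!
The weighted mass on the annulus `r ≤ ‖x - x₀‖ ≤ R₀` is at most `(4λ/r²)` times the second moment
`∫ u² (‖x - x₀‖²/(4λ)) e^{-‖x - x₀‖²/(4λ)}`, which a Hardy-type uncertainty inequality bounds by
`N ∫ u² e^{…} + 4λ ∫ ‖∇u‖² e^{…}`. That inequality comes from `∫_B div((x - x₀) φ) ≥ 0` for
`φ = u² e^{-‖x - x₀‖²/(4λ)} ≥ 0`, where the cross term `2u ⟨∇u, x - x₀⟩` is absorbed by AM-GM.
The divergence inequality is proved ray by ray in polar coordinates: along `t ↦ x₀ + tω` the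
integrand `t^{N-1} div((x - x₀) φ)` is the derivative of `t^N φ(x₀ + tω)`, which vanishes at
`t = 0` and is nonnegative at `t = R₀`.
-/

open MeasureTheory Set Metric Module

namespace MeasureTheory

theorem integral_volumeIoiPow (n : ℕ) (h : ℝ → ℝ) :
    ∫ t : Ioi (0 : ℝ), h t ∂Measure.volumeIoiPow n = ∫ t in Ioi (0 : ℝ), t ^ n * h t := by
  simp only [Measure.volumeIoiPow, ENNReal.ofReal]
  rw [integral_withDensity_eq_integral_smul (measurable_subtype_coe.pow_const _).real_toNNReal,
    integral_subtype_comap measurableSet_Ioi fun a ↦ Real.toNNReal (a ^ n) • h a,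
    setIntegral_congr_fun measurableSet_Ioi fun x hx ↦ ?_]
  rw [NNReal.smul_def, Real.coe_toNNReal _ (pow_nonneg hx.out.le _), smul_eq_mul]

variable {E : Type*} [NormedAddCommGroup E] [NormedSpace ℝ E] [FiniteDimensional ℝ E]
  [Nontrivial E] [MeasurableSpace E] [BorelSpace E] (μ : Measure E) [μ.IsAddHaarMeasure]

theorem integral_eq_integral_sphere_integral_Ioi {G : E → ℝ} (hG : Integrable G μ) :
    ∫ x, G x ∂μ = ∫ ω : sphere (0 : E) 1,
      (∫ t in Ioi (0 : ℝ), t ^ (finrank ℝ E - 1) * G (t • (ω : E))) ∂μ.toSphere := by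
  have hpolar : ∀ x : ({0}ᶜ : Set E),
      G x = G ((homeomorphUnitSphereProd E x).2.1 • ((homeomorphUnitSphereProd E x).1 : E)) := by
    intro x
    simp only [homeomorphUnitSphereProd_apply_fst_coe, homeomorphUnitSphereProd_apply_snd_coe]
    rw [smul_smul, mul_inv_cancel₀ (norm_ne_zero_iff.2 x.2), one_smul]
  have hmp := μ.measurePreserving_homeomorphUnitSphereProd
  have hemb := (homeomorphUnitSphereProd E).measurableEmbedding
  have hGc : Integrable (fun x : ({0}ᶜ : Set E) ↦ G x) (μ.comap (↑)) :=
    (integrableOn_iff_comap_subtypeVal (measurableSet_singleton 0).compl).1 hG.integrableOn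
  have hint : Integrable (fun p : sphere (0 : E) 1 × Ioi (0 : ℝ) ↦ G (p.2.1 • (p.1 : E)))
      (μ.toSphere.prod (.volumeIoiPow (finrank ℝ E - 1))) := by
    rw [← hmp.integrable_comp_emb hemb]
    exact hGc.congr (.of_forall hpolar)
  calc ∫ x, G x ∂μ = ∫ x : ({0}ᶜ : Set E), G x ∂(μ.comap (↑)) := by
        rw [integral_subtype_comap (measurableSet_singleton _).compl fun x ↦ G x,
          restrict_compl_singleton]
    _ = ∫ p : sphere (0 : E) 1 × Ioi (0 : ℝ), G (p.2.1 • (p.1 : E))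
          ∂(μ.toSphere.prod (.volumeIoiPow (finrank ℝ E - 1))) := by
        rw [← hmp.integral_comp hemb]
        exact integral_congr_ae (.of_forall hpolar)
    _ = _ := by
        rw [integral_prod _ hint]
        exact integral_congr_ae (.of_forall fun ω ↦ integral_volumeIoiPow _ fun t ↦ G (t • (ω : E)))

theorem setIntegral_closedBall_eq_integral_sphere_intervalIntegral (c : E) {R : ℝ}
    (hR : 0 ≤ R) {G : E → ℝ} (hG : IntegrableOn G (closedBall c R) μ) :
    ∫ x in closedBall c R, G x ∂μ = ∫ ω : sphere (0 : E) 1,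
      (∫ t in (0 : ℝ)..R, t ^ (finrank ℝ E - 1) * G (c + t • (ω : E))) ∂μ.toSphere := by
  rw [← integral_indicator measurableSet_closedBall, ← integral_add_left_eq_self _ c,
    integral_eq_integral_sphere_integral_Ioi μ
      (((integrable_indicator_iff measurableSet_closedBall).2 hG).comp_add_left c)]
  congr 1 with ω
  rw [intervalIntegral.integral_of_le hR, ← inter_eq_right.2 Ioc_subset_Ioi_self,
    ← setIntegral_indicator measurableSet_Ioc]
  refine setIntegral_congr_fun measurableSet_Ioi fun t (ht : 0 < t) ↦ ?_
  have hmem : c + t • (ω : E) ∈ closedBall c R ↔ t ∈ Ioc 0 R := by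
    simp [norm_smul, norm_eq_of_mem_sphere ω, abs_of_pos ht, ht]
  by_cases htR : t ∈ Ioc 0 R
  · simp [indicator_of_mem htR, indicator_of_mem (hmem.2 htR)]
  · simp [indicator_of_notMem htR, indicator_of_notMem (mt hmem.1 htR)]

end MeasureTheory

section Divergence

variable {E : Type*} [NormedAddCommGroup E] [NormedSpace ℝ E]

theorem ContDiffOn.continuousOn_const_mul_add_fderiv_apply_sub {φ : E → ℝ} {s : Set E}
    (hφ : ContDiffOn ℝ 1 φ s) (hs : IsOpen s) (a : ℝ) (c : E) :
    ContinuousOn (fun x ↦ a * φ x + fderiv ℝ φ x (x - c)) s :=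
  (continuousOn_const.mul hφ.continuousOn).add
    ((hφ.continuousOn_fderiv_of_isOpen hs le_rfl).clm_apply (by fun_prop))

variable [FiniteDimensional ℝ E] [MeasurableSpace E] [BorelSpace E] (μ : Measure E)
  [μ.IsAddHaarMeasure]

/-- The integrand is `div ((x - c) • φ x)`. -/
theorem setIntegral_closedBall_divergence_sub_smul_nonneg (c : E) (R : ℝ) {φ : E → ℝ}
    {s : Set E} (hs : IsOpen s) (hball : closedBall c R ⊆ s) (hφ : ContDiffOn ℝ 1 φ s)
    (hφ₀ : ∀ x ∈ closedBall c R, 0 ≤ φ x) :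
    0 ≤ ∫ x in closedBall c R, (finrank ℝ E * φ x + fderiv ℝ φ x (x - c)) ∂μ := by
  rcases subsingleton_or_nontrivial E with hE | hE
  · refine integral_nonneg fun x ↦ ?_
    simp [finrank_zero_of_subsingleton, Subsingleton.elim (x - c) 0]
  rcases lt_or_ge R 0 with hR | hR
  · simp [closedBall_eq_empty.2 hR]
  set n := finrank ℝ E
  obtain ⟨m, hm⟩ : ∃ m, n = m + 1 := Nat.exists_eq_succ_of_ne_zero finrank_pos.ne'
  have hcont := hφ.continuousOn_const_mul_add_fderiv_apply_sub hs n c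
  rw [setIntegral_closedBall_eq_integral_sphere_intervalIntegral μ c hR
    ((hcont.mono hball).integrableOn_compact (isCompact_closedBall c R))]
  refine integral_nonneg fun ω ↦ ?_
  have hray : ∀ t ∈ uIcc 0 R, c + t • (ω : E) ∈ s := fun t ht ↦ hball <| by
    rw [uIcc_of_le hR] at ht
    simp [norm_smul, norm_eq_of_mem_sphere ω, abs_of_nonneg ht.1, ht.2]
  have hderiv : ∀ t ∈ uIcc 0 R, HasDerivAt (fun t ↦ t ^ n * φ (c + t • (ω : E)))
      (t ^ (n - 1) * (n * φ (c + t • (ω : E)) + fderiv ℝ φ (c + t • (ω : E))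
        (c + t • (ω : E) - c))) t := by
    intro t ht
    have hφx := (hφ.differentiableOn one_ne_zero).differentiableAt (hs.mem_nhds (hray t ht))
    have hline : HasDerivAt (fun t : ℝ ↦ c + t • (ω : E)) (ω : E) t := by
      simpa using ((hasDerivAt_id t).smul_const (ω : E)).const_add c
    refine ((hasDerivAt_pow n t).fun_mul (hφx.hasFDerivAt.comp_hasDerivAt t hline)).congr_deriv ?_
    rw [add_sub_cancel_left, map_smul, smul_eq_mul, hm, Nat.add_sub_cancel, pow_succ,
      Function.comp_apply]
    ring
  rw [intervalIntegral.integral_eq_sub_of_hasDerivAt hderiv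
    (ContinuousOn.intervalIntegrable ((continuousOn_pow _).mul
      (hcont.comp (by fun_prop) hray))), zero_pow (by omega), zero_mul, sub_zero]
  exact mul_nonneg (pow_nonneg hR _) (hφ₀ _ <| by
    simp [norm_smul, norm_eq_of_mem_sphere ω, abs_of_nonneg hR])

end Divergence

section Hardy

variable {E : Type*} [NormedAddCommGroup E] [InnerProductSpace ℝ E]

theorem fderiv_sq_mul_gaussian_apply_sub (c : E) (lam : ℝ) {v : E → ℝ} {x : E}
    (hv : DifferentiableAt ℝ v x) :
    fderiv ℝ (fun y ↦ v y ^ 2 * Real.exp (-‖y - c‖ ^ 2 / (4 * lam))) x (x - c) =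
      (2 * v x * fderiv ℝ v x (x - c) - v x ^ 2 * (‖x - c‖ ^ 2 / (2 * lam))) *
        Real.exp (-‖x - c‖ ^ 2 / (4 * lam)) := by
  have hw := (((hasDerivAt_id (‖x - c‖ ^ 2)).neg.div_const (4 * lam)).exp).comp_hasFDerivAt x
    ((hasFDerivAt_id x).sub_const c).norm_sq
  have hd : HasFDerivAt (fun y ↦ v y ^ 2 * Real.exp (-‖y - c‖ ^ 2 / (4 * lam))) _ x :=
    (hv.hasFDerivAt.pow 2).mul hw
  rw [hd.fderiv]
  simp only [Pi.neg_apply, id_eq, ContinuousLinearMap.comp_id, Nat.add_one_sub_one, pow_one,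
    nsmul_eq_mul, Nat.cast_ofNat, add_apply, smul_apply, coe_innerSL_apply,
    real_inner_self_eq_norm_sq, smul_eq_mul]
  ring

theorem two_mul_mul_apply_le {lam : ℝ} (hlam : 0 < lam) (a : ℝ) (L : E →L[ℝ] ℝ) (y : E) :
    2 * a * L y ≤ a ^ 2 * (‖y‖ ^ 2 / (4 * lam)) + 4 * lam * ‖L‖ ^ 2 := by
  have hLy : 2 * a * L y ≤ 2 * (|a| * ‖y‖) * ‖L‖ := by
    calc 2 * a * L y ≤ 2 * (|a| * |L y|) := by
          rw [mul_assoc, ← abs_mul]; gcongr; exact le_abs_self _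
      _ ≤ 2 * (|a| * (‖L‖ * ‖y‖)) := by gcongr; exact L.le_opNorm y
      _ = _ := by ring
  have hsq : a ^ 2 * (‖y‖ ^ 2 / (4 * lam)) + 4 * lam * ‖L‖ ^ 2 - 2 * (|a| * ‖y‖) * ‖L‖ =
      (|a| * ‖y‖ - 4 * lam * ‖L‖) ^ 2 / (4 * lam) := by
    field_simp
    rw [← sq_abs a]
    ring
  have : 0 ≤ (|a| * ‖y‖ - 4 * lam * ‖L‖) ^ 2 / (4 * lam) := by positivity
  linarith

variable [FiniteDimensional ℝ E] [MeasurableSpace E] [BorelSpace E] (μ : Measure E)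
  [μ.IsAddHaarMeasure]

theorem setIntegral_closedBall_sq_mul_norm_sq_mul_gaussian_le (c : E) {lam : ℝ} (hlam : 0 < lam)
    (R : ℝ) {v : E → ℝ} {s : Set E} (hs : IsOpen s) (hball : closedBall c R ⊆ s)
    (hv : ContDiffOn ℝ 1 v s) :
    ∫ x in closedBall c R, v x ^ 2 * (‖x - c‖ ^ 2 / (4 * lam)) *
        Real.exp (-‖x - c‖ ^ 2 / (4 * lam)) ∂μ ≤
      finrank ℝ E * ∫ x in closedBall c R, v x ^ 2 * Real.exp (-‖x - c‖ ^ 2 / (4 * lam)) ∂μ +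
        4 * lam * ∫ x in closedBall c R,
          ‖gradient v x‖ ^ 2 * Real.exp (-‖x - c‖ ^ 2 / (4 * lam)) ∂μ := by
  set w : E → ℝ := fun x ↦ Real.exp (-‖x - c‖ ^ 2 / (4 * lam))
  have hw : ContDiff ℝ 1 w :=
    (((contDiff_norm_sq ℝ).comp (contDiff_id.sub contDiff_const)).neg.div_const _).exp
  have hint : ∀ f : E → ℝ, ContinuousOn f s → IntegrableOn f (closedBall c R) μ :=
    fun f hf ↦ (hf.mono hball).integrableOn_compact (isCompact_closedBall c R)
  have hA := hint (fun x ↦ v x ^ 2 * w x) ((hv.continuousOn.pow 2).mul hw.continuous.continuousOn)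
  have hB := hint (fun x ↦ v x ^ 2 * (‖x - c‖ ^ 2 / (4 * lam)) * w x)
    (((hv.continuousOn.pow 2).mul (by fun_prop)).mul hw.continuous.continuousOn)
  have hC := hint (fun x ↦ ‖gradient v x‖ ^ 2 * w x)
    ((((InnerProductSpace.toDual ℝ E).symm.continuous.comp_continuousOn
      (hv.continuousOn_fderiv_of_isOpen hs le_rfl)).norm.pow 2).mul hw.continuous.continuousOn)
  have hφ : ContDiffOn ℝ 1 (fun x ↦ v x ^ 2 * w x) s := (hv.pow 2).mul hw.contDiffOn
  have hpt : ∀ x ∈ closedBall c R, v x ^ 2 * (‖x - c‖ ^ 2 / (4 * lam)) * w x +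
      (finrank ℝ E * (v x ^ 2 * w x) + fderiv ℝ (fun y ↦ v y ^ 2 * w y) x (x - c)) ≤
        finrank ℝ E * (v x ^ 2 * w x) + 4 * lam * (‖gradient v x‖ ^ 2 * w x) := by
    intro x hx
    have hvx := (hv.differentiableOn one_ne_zero).differentiableAt (hs.mem_nhds (hball hx))
    rw [fderiv_sq_mul_gaussian_apply_sub c lam hvx]
    have hgrad : ‖gradient v x‖ = ‖fderiv ℝ v x‖ := (InnerProductSpace.toDual ℝ E).symm.norm_map _
    have hamgm := two_mul_mul_apply_le hlam (v x) (fderiv ℝ v x) (x - c)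
    have hhalf : ‖x - c‖ ^ 2 / (2 * lam) = 2 * (‖x - c‖ ^ 2 / (4 * lam)) := by
      field_simp; ring
    rw [hgrad, hhalf]
    have := Real.exp_pos (-‖x - c‖ ^ 2 / (4 * lam))
    nlinarith
  have hdiv := hint _ (hφ.continuousOn_const_mul_add_fderiv_apply_sub hs (finrank ℝ E) c)
  calc ∫ x in closedBall c R, v x ^ 2 * (‖x - c‖ ^ 2 / (4 * lam)) * w x ∂μ
      ≤ ∫ x in closedBall c R, v x ^ 2 * (‖x - c‖ ^ 2 / (4 * lam)) * w x ∂μ +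
          ∫ x in closedBall c R, (finrank ℝ E * (v x ^ 2 * w x) +
            fderiv ℝ (fun y ↦ v y ^ 2 * w y) x (x - c)) ∂μ :=
        le_add_of_nonneg_right <| setIntegral_closedBall_divergence_sub_smul_nonneg μ c R hs hball
          hφ fun x _ ↦ by positivity
    _ = ∫ x in closedBall c R, (v x ^ 2 * (‖x - c‖ ^ 2 / (4 * lam)) * w x +
          (finrank ℝ E * (v x ^ 2 * w x) + fderiv ℝ (fun y ↦ v y ^ 2 * w y) x (x - c))) ∂μ :=
        (integral_add hB hdiv).symm
    _ ≤ ∫ x in closedBall c R,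
          (finrank ℝ E * (v x ^ 2 * w x) + 4 * lam * (‖gradient v x‖ ^ 2 * w x)) ∂μ :=
        setIntegral_mono_on (hB.add hdiv) ((hA.const_mul _).fun_add (hC.const_mul _))
          measurableSet_closedBall hpt
    _ = _ := by
        rw [integral_add (hA.const_mul _) (hC.const_mul _), integral_const_mul, integral_const_mul]

end Hardy

theorem setIntegral_closedBall_le_setIntegral_norm_sq_div_mul_add {E : Type*}
    [NormedAddCommGroup E] [MeasurableSpace E] [OpensMeasurableSpace E] (μ : Measure E) (c : E)
    {r R : ℝ} (hr : 0 < r) (hrR : r ≤ R) {f : E → ℝ} (hf : IntegrableOn f (closedBall c R) μ)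
    (hqf : IntegrableOn (fun x ↦ ‖x - c‖ ^ 2 / r ^ 2 * f x) (closedBall c R) μ)
    (hf₀ : ∀ x ∈ closedBall c R, 0 ≤ f x) :
    ∫ x in closedBall c R, f x ∂μ ≤
      ∫ x in closedBall c R, ‖x - c‖ ^ 2 / r ^ 2 * f x ∂μ + ∫ x in closedBall c r, f x ∂μ := by
  have hpt : ∀ x ∈ closedBall c R,
      f x ≤ ‖x - c‖ ^ 2 / r ^ 2 * f x + (closedBall c r).indicator f x := by
    intro x hx
    by_cases hxr : x ∈ closedBall c r
    · rw [indicator_of_mem hxr]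
      have := mul_nonneg (by positivity : 0 ≤ ‖x - c‖ ^ 2 / r ^ 2) (hf₀ x hx)
      linarith
    · rw [indicator_of_notMem hxr, add_zero]
      have hrx : r ≤ ‖x - c‖ := by
        simpa [dist_eq_norm] using (not_le.1 (mt mem_closedBall.2 hxr)).le
      refine le_mul_of_one_le_left (hf₀ x hx) ?_
      rw [one_le_div (by positivity)]
      gcongr
  calc ∫ x in closedBall c R, f x ∂μ
      ≤ ∫ x in closedBall c R, (‖x - c‖ ^ 2 / r ^ 2 * f x + (closedBall c r).indicator f x) ∂μ :=
        setIntegral_mono_on hf (hqf.add (hf.indicator measurableSet_closedBall))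
          measurableSet_closedBall hpt
    _ = _ := by
        rw [integral_add hqf (hf.indicator measurableSet_closedBall),
          setIntegral_indicator measurableSet_closedBall,
          inter_eq_right.2 (closedBall_subset_closedBall hrR)]

theorem two_ball_splitting_general (N : ℕ) (x₀ : EuclideanSpace ℝ (Fin N))
    (lam R₀ r : ℝ) (hlam : 0 < lam) (hr : 0 < r) (hrR : r ≤ R₀)
    (u : EuclideanSpace ℝ (Fin N) → ℝ) (s : Set (EuclideanSpace ℝ (Fin N)))
    (hs : IsOpen s) (hball : Metric.closedBall x₀ R₀ ⊆ s) (hu : ContDiffOn ℝ 1 u s) :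
    (∫ x in Metric.closedBall x₀ R₀, (u x) ^ 2 * Real.exp (-‖x - x₀‖ ^ 2 / (4 * lam))) ≤
      (16 * lam / r ^ 2) *
          (((N : ℝ) / 4) *
              (∫ x in Metric.closedBall x₀ R₀,
                (u x) ^ 2 * Real.exp (-‖x - x₀‖ ^ 2 / (4 * lam))) +
            lam *
              ∫ x in Metric.closedBall x₀ R₀,
                ‖gradient u x‖ ^ 2 * Real.exp (-‖x - x₀‖ ^ 2 / (4 * lam))) +
        ∫ x in Metric.closedBall x₀ r, (u x) ^ 2 * Real.exp (-‖x - x₀‖ ^ 2 / (4 * lam)) := by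
  have hint : ∀ f : EuclideanSpace ℝ (Fin N) → ℝ, ContinuousOn f s →
      IntegrableOn f (closedBall x₀ R₀) :=
    fun f hf ↦ (hf.mono hball).integrableOn_compact (isCompact_closedBall x₀ R₀)
  have hw : Continuous fun x : EuclideanSpace ℝ (Fin N) ↦ Real.exp (-‖x - x₀‖ ^ 2 / (4 * lam)) := by
    fun_prop
  have hhardy := setIntegral_closedBall_sq_mul_norm_sq_mul_gaussian_le volume x₀ hlam R₀ hs hball hu
  rw [finrank_euclideanSpace_fin] at hhardy
  have hweight : ∫ x in closedBall x₀ R₀,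
      ‖x - x₀‖ ^ 2 / r ^ 2 * (u x ^ 2 * Real.exp (-‖x - x₀‖ ^ 2 / (4 * lam))) =
      4 * lam / r ^ 2 * ∫ x in closedBall x₀ R₀,
        u x ^ 2 * (‖x - x₀‖ ^ 2 / (4 * lam)) * Real.exp (-‖x - x₀‖ ^ 2 / (4 * lam)) := by
    rw [← integral_const_mul]
    congr 1 with x
    field_simp
  have hA := (hu.continuousOn.pow 2).mul hw.continuousOn
  have hqA := (by fun_prop : Continuous fun x ↦ ‖x - x₀‖ ^ 2 / r ^ 2).continuousOn.mul hA
  calc _ ≤ 4 * lam / r ^ 2 * (∫ x in closedBall x₀ R₀,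
          u x ^ 2 * (‖x - x₀‖ ^ 2 / (4 * lam)) * Real.exp (-‖x - x₀‖ ^ 2 / (4 * lam))) +
        ∫ x in closedBall x₀ r, u x ^ 2 * Real.exp (-‖x - x₀‖ ^ 2 / (4 * lam)) := by
        rw [← hweight]
        exact setIntegral_closedBall_le_setIntegral_norm_sq_div_mul_add volume x₀ hr hrR
          (hint _ hA) (hint _ hqA) fun x _ ↦ by positivity
    _ ≤ 4 * lam / r ^ 2 * (N * (∫ x in closedBall x₀ R₀,
          u x ^ 2 * Real.exp (-‖x - x₀‖ ^ 2 / (4 * lam))) + 4 * lam * ∫ x in closedBall x₀ R₀,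
            ‖gradient u x‖ ^ 2 * Real.exp (-‖x - x₀‖ ^ 2 / (4 * lam))) +
        ∫ x in closedBall x₀ r, u x ^ 2 * Real.exp (-‖x - x₀‖ ^ 2 / (4 * lam)) := by gcongr
    _ = _ := by ring

/-- Two-ball weighted splitting inequality (Step 3 in the proof of the two-ball and
one-cylinder inequality). -/
theorem two_ball_splitting (N : ℕ) (hN : 1 ≤ N) (x₀ : EuclideanSpace ℝ (Fin N))
    (lam R₀ r : ℝ) (hlam : 0 < lam) (hR₀ : 0 < R₀) (hr : 0 < r) (hrR : r ≤ R₀)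
    (u : EuclideanSpace ℝ (Fin N) → ℝ) (s : Set (EuclideanSpace ℝ (Fin N)))
    (hs : IsOpen s) (hball : Metric.closedBall x₀ R₀ ⊆ s) (hu : ContDiffOn ℝ 1 u s) :
    (∫ x in Metric.closedBall x₀ R₀, (u x) ^ 2 * Real.exp (-‖x - x₀‖ ^ 2 / (4 * lam))) ≤
      (16 * lam / r ^ 2) *
          (((N : ℝ) / 4) *
              (∫ x in Metric.closedBall x₀ R₀,
                (u x) ^ 2 * Real.exp (-‖x - x₀‖ ^ 2 / (4 * lam))) +
            lam *
              ∫ x in Metric.closedBall x₀ R₀,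
                ‖gradient u x‖ ^ 2 * Real.exp (-‖x - x₀‖ ^ 2 / (4 * lam))) +
        ∫ x in Metric.closedBall x₀ r, (u x) ^ 2 * Real.exp (-‖x - x₀‖ ^ 2 / (4 * lam)) :=
  two_ball_splitting_general N x₀ lam R₀ r hlam hr hrR u s hs hball hu
end
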